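/- arXiv:1708.06054 — 3 statements merged into one kernel-verified Lean document; each statement's English description precedes it below -/
import Mathlib

section
/- A vector of the form (0^{16}(±2)^5, 2, 2, −2) ∈ Z^24 lies in the Leech lattice if and only if the set W of the 5 positions with entries ±2 satisfies that W ∪ {22,23,24} is an octad of the binary Golay code C₂₄ and the number of minus signs among the 5 entries is odd. -/
open scoped BigOperators

/-- A generator matrix of the extended binary Golay code (MOG coordinates). -/
def golayMatrix : Matrix (Fin 12) (Fin 24) (ZMod 2) :=
  !![0, 0, 0, 0, 0, 0, 0, 0, 0, 0, 0, 0, 0, 0, 0, 0, 1, 1, 1, 1, 1, 1, 1, 1;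
    0, 0, 0, 0, 0, 0, 0, 0, 0, 0, 0, 0, 1, 1, 1, 1, 0, 0, 0, 0, 1, 1, 1, 1;
    0, 0, 0, 0, 0, 0, 0, 0, 0, 0, 1, 1, 0, 0, 1, 1, 0, 0, 1, 1, 0, 0, 1, 1;
    0, 0, 0, 0, 0, 0, 0, 0, 0, 1, 0, 1, 0, 1, 0, 1, 0, 1, 0, 1, 0, 1, 0, 1;
    0, 0, 0, 0, 0, 0, 0, 0, 1, 0, 0, 1, 0, 1, 1, 0, 0, 1, 1, 0, 1, 0, 0, 1;
    0, 0, 0, 0, 0, 0, 1, 1, 0, 0, 0, 0, 0, 0, 1, 1, 0, 1, 1, 0, 0, 1, 0, 1;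
    0, 0, 0, 0, 0, 1, 0, 1, 0, 0, 0, 0, 0, 1, 0, 1, 0, 0, 1, 1, 0, 1, 1, 0;
    0, 0, 0, 0, 1, 0, 0, 1, 0, 0, 0, 0, 0, 1, 1, 0, 0, 1, 0, 1, 1, 1, 0, 0;
    0, 0, 0, 1, 0, 0, 0, 1, 0, 0, 0, 1, 0, 0, 0, 1, 0, 1, 1, 1, 1, 0, 0, 0;
    0, 0, 1, 0, 0, 0, 0, 1, 0, 0, 0, 1, 0, 0, 1, 0, 0, 0, 1, 0, 1, 1, 1, 0;
    0, 1, 0, 0, 0, 0, 0, 1, 0, 0, 0, 1, 0, 1, 0, 0, 0, 0, 0, 1, 1, 0, 1, 1;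
    1, 0, 0, 0, 0, 0, 0, 1, 0, 0, 0, 1, 0, 1, 1, 1, 0, 1, 0, 0, 0, 0, 1, 0]

/-- The extended binary Golay code `C₂₄`. -/
def GolayCode : Submodule (ZMod 2) (Fin 24 → ZMod 2) :=
  Submodule.span (ZMod 2) (Set.range fun i => golayMatrix i)

/-- Membership in the Leech lattice `Λ₂₄ ⊂ ℤ²⁴` (coordinates scaled by `√8`),
via the standard congruence characterization. -/
def IsLeech (x : Fin 24 → ℤ) : Prop :=
  ∃ m : ℤ, (m = 0 ∨ m = 1) ∧ (∀ i, (2:ℤ) ∣ (x i - m)) ∧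
    ((fun i => if (4:ℤ) ∣ (x i - m - 2) then (1 : ZMod 2) else 0) ∈ GolayCode) ∧
    (8:ℤ) ∣ ((∑ i, x i) - 4 * m)

/-- The inner product `⟨x, y⟩ = (Σ xᵢ yᵢ)/8` on the Leech lattice. -/
def leechInner (x y : Fin 24 → ℤ) : ℚ := (∑ i, (x i : ℚ) * (y i : ℚ)) / 8

/-- The lattice point `A = (0²¹, 4, 0, −4)`. -/
def vA : Fin 24 → ℤ := fun i => if i.val = 21 then 4 else if i.val = 23 then -4 else 0

/-- The lattice point `B = (0²¹, 0, 4, −4)`. -/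
def vB : Fin 24 → ℤ := fun i => if i.val = 22 then 4 else if i.val = 23 then -4 else 0

/-- `T_AB`: lattice points `T` with `|OT| = |AT| = |BT| = 2`. -/
def TAB : Set (Fin 24 → ℤ) :=
  {T | IsLeech T ∧ leechInner T T = 4 ∧
       leechInner (T - vA) (T - vA) = 4 ∧ leechInner (T - vB) (T - vB) = 4}

/-- An octad: a weight-8 codeword of the Golay code. -/
def IsOctad (c : Fin 24 → ZMod 2) : Prop :=
  c ∈ GolayCode ∧ Nat.card {i : Fin 24 // c i ≠ 0} = 8

/-- a vector of the form `(0¹⁶(±2)⁵, 2, 2, −2)` lies in the Leech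
lattice iff the five positions of `±2` together with `{22,23,24}` form an octad
of the Golay code and the number of minus signs is odd. -/
theorem type2_mem_leech_iff (x : Fin 24 → ℤ)
    (h21 : ∀ i : Fin 24, i.val < 21 → x i = 0 ∨ x i = 2 ∨ x i = -2)
    (hcard : Nat.card {i : Fin 24 // i.val < 21 ∧ x i ≠ 0} = 5)
    (h22 : x ⟨21, by omega⟩ = 2) (h23 : x ⟨22, by omega⟩ = 2)
    (h24 : x ⟨23, by omega⟩ = -2) :
    IsLeech x ↔
      (IsOctad (fun i => if (i.val < 21 ∧ x i ≠ 0) ∨ 21 ≤ i.val then 1 else 0) ∧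
       Odd (Nat.card {i : Fin 24 // i.val < 21 ∧ x i = -2})) := by
  classical
  have hval : ∀ i : Fin 24, x i = 0 ∨ x i = 2 ∨ x i = -2 := by
    intro i
    by_cases hi : i.val < 21
    · exact h21 i hi
    · have h3 : i.val = 21 ∨ i.val = 22 ∨ i.val = 23 := by omega
      rcases h3 with h | h | h
      · have : i = ⟨21, by omega⟩ := Fin.ext h
        rw [this, h22]; tauto
      · have : i = ⟨22, by omega⟩ := Fin.ext h
        rw [this, h23]; tauto
      · have : i = ⟨23, by omega⟩ := Fin.ext h
        rw [this, h24]; tauto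
  set P := Finset.univ.filter (fun i : Fin 24 => i.val < 21 ∧ x i = 2) with hP
  set N := Finset.univ.filter (fun i : Fin 24 => i.val < 21 ∧ x i = -2) with hN
  have hcard' : (Finset.univ.filter (fun i : Fin 24 => i.val < 21 ∧ x i ≠ 0)).card = 5 := by
    rw [← hcard, Nat.card_eq_fintype_card, Fintype.card_subtype]
  have hPN : P.card + N.card = 5 := by
    rw [← hcard', ← Finset.card_union_of_disjoint (by
      rw [hP, hN, Finset.disjoint_filter]
      rintro i - ⟨-, h2⟩ ⟨-, h2'⟩
      omega)]
    congr 1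
    ext i
    simp only [hP, hN, Finset.mem_union, Finset.mem_filter, Finset.mem_univ, true_and]
    constructor
    · rintro (⟨h1, h2⟩ | ⟨h1, h2⟩) <;> exact ⟨h1, by omega⟩
    · rintro ⟨h1, h2⟩
      rcases h21 i h1 with h | h | h
      · exact absurd h h2
      · exact Or.inl ⟨h1, h⟩
      · exact Or.inr ⟨h1, h⟩
  have hNcard : Nat.card {i : Fin 24 // i.val < 21 ∧ x i = -2} = N.card := by
    rw [Nat.card_eq_fintype_card, Fintype.card_subtype]
  -- the sum of the coordinates
  have hpoint : ∀ i : Fin 24, x i =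
      (if i.val < 21 ∧ x i = 2 then (2:ℤ) else 0) +
      (if i.val < 21 ∧ x i = -2 then (-2:ℤ) else 0) +
      (if i.val = 21 then (2:ℤ) else if i.val = 22 then 2 else if i.val = 23 then -2 else 0) := by
    intro i
    by_cases hi : i.val < 21
    · have e1 : ¬ i.val = 21 := by omega
      have e2 : ¬ i.val = 22 := by omega
      have e3 : ¬ i.val = 23 := by omega
      rcases h21 i hi with h | h | h <;> simp [h, hi, e1, e2, e3]
    · have h3 : i.val = 21 ∨ i.val = 22 ∨ i.val = 23 := by omega
      rcases h3 with h | h | h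
      · have e : i = ⟨21, by omega⟩ := Fin.ext h
        rw [e, h22]; norm_num
      · have e : i = ⟨22, by omega⟩ := Fin.ext h
        rw [e, h23]; norm_num
      · have e : i = ⟨23, by omega⟩ := Fin.ext h
        rw [e, h24]; norm_num
  have hsum : (∑ i, x i) = 2 * (P.card : ℤ) - 2 * (N.card : ℤ) + 2 := by
    calc (∑ i, x i) = ∑ i : Fin 24,
        ((if i.val < 21 ∧ x i = 2 then (2:ℤ) else 0) +
         (if i.val < 21 ∧ x i = -2 then (-2:ℤ) else 0) +
         (if i.val = 21 then (2:ℤ) else if i.val = 22 then 2 else if i.val = 23 then -2 else 0)) :=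
          Finset.sum_congr rfl (fun i _ => hpoint i)
      _ = (∑ i : Fin 24, if i.val < 21 ∧ x i = 2 then (2:ℤ) else 0) +
          (∑ i : Fin 24, if i.val < 21 ∧ x i = -2 then (-2:ℤ) else 0) +
          (∑ i : Fin 24, if i.val = 21 then (2:ℤ) else if i.val = 22 then 2 else if i.val = 23 then -2 else 0) := by
            rw [← Finset.sum_add_distrib, ← Finset.sum_add_distrib]
      _ = 2 * (P.card : ℤ) - 2 * (N.card : ℤ) + 2 := by
            rw [← Finset.sum_filter, ← Finset.sum_filter, Finset.sum_const, Finset.sum_const]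
            have h3 : (∑ i : Fin 24, if i.val = 21 then (2:ℤ) else if i.val = 22 then 2 else if i.val = 23 then -2 else 0) = 2 := by
              decide
            rw [h3, ← hP, ← hN]
            ring
  -- equality of the two indicator functions
  have hfun : (fun i => if (4:ℤ) ∣ (x i - 2) then (1 : ZMod 2) else 0) =
      (fun i : Fin 24 => if (i.val < 21 ∧ x i ≠ 0) ∨ 21 ≤ i.val then (1 : ZMod 2) else 0) := by
    funext i
    by_cases hi : i.val < 21
    · have e : ¬ (21 ≤ i.val) := by omega
      rcases h21 i hi with h | h | h
      · rw [h]; norm_num [e]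
      · rw [h]; norm_num [hi, e]
      · rw [h]; norm_num [hi, e]
    · have e : 21 ≤ i.val := by omega
      have : (4:ℤ) ∣ (x i - 2) := by
        rcases hval i with h | h | h
        · exfalso
          have h3 : i.val = 21 ∨ i.val = 22 ∨ i.val = 23 := by omega
          rcases h3 with h' | h' | h'
          · have : i = ⟨21, by omega⟩ := Fin.ext h'
            rw [this, h22] at h; omega
          · have : i = ⟨22, by omega⟩ := Fin.ext h'
            rw [this, h23] at h; omega
          · have : i = ⟨23, by omega⟩ := Fin.ext h'
            rw [this, h24] at h; omega
        · rw [h]; decide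
        · rw [h]; decide
      simp [this, e]
  -- the weight of the codeword is 8
  have hwt : Nat.card {i : Fin 24 //
      (fun i : Fin 24 => if (i.val < 21 ∧ x i ≠ 0) ∨ 21 ≤ i.val then (1 : ZMod 2) else 0) i ≠ 0} = 8 := by
    rw [Nat.card_eq_fintype_card, Fintype.card_subtype]
    have hcong : (Finset.univ.filter (fun i : Fin 24 =>
        (fun i : Fin 24 => if (i.val < 21 ∧ x i ≠ 0) ∨ 21 ≤ i.val then (1 : ZMod 2) else 0) i ≠ 0)) =
        Finset.univ.filter (fun i : Fin 24 => (i.val < 21 ∧ x i ≠ 0) ∨ 21 ≤ i.val) := by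
      ext i
      simp only [Finset.mem_filter, Finset.mem_univ, true_and]
      by_cases h : (i.val < 21 ∧ x i ≠ 0) ∨ 21 ≤ i.val <;> simp [h]
    rw [hcong, Finset.filter_or, Finset.card_union_of_disjoint (by
        rw [Finset.disjoint_filter]
        rintro i - ⟨h1, -⟩ h2
        omega), hcard']
    decide
  constructor
  · rintro ⟨m, hm01, hdvd, hg, h8⟩
    have hm : m = 0 := by
      rcases hm01 with h | h
      · exact h
      · exfalso
        have := hdvd ⟨21, by omega⟩
        rw [h22, h] at this
        omega
    subst hm
    simp only [sub_zero] at hg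
    refine ⟨⟨hfun ▸ hg, hwt⟩, ?_⟩
    rw [hNcard, Nat.odd_iff]
    rw [hsum] at h8
    have hP5 : P.card + N.card = 5 := hPN
    omega
  · rintro ⟨⟨hgc, -⟩, hodd⟩
    refine ⟨0, Or.inl rfl, ?_, ?_, ?_⟩
    · intro i
      rcases hval i with h | h | h <;> rw [h] <;> decide
    · simp only [sub_zero]
      rw [hfun]
      exact hgc
    · rw [hNcard, Nat.odd_iff] at hodd
      rw [hsum]
      have hP5 : P.card + N.card = 5 := hPN
      omega
end

section
/- Let R be the rank-2 even lattice spanned by vectors A, B with ⟨A,A⟩ = ⟨B,B⟩ = 4 and ⟨A,B⟩ = 2 (so R ≅ the root lattice A₂ scaled by 2). Then the orthogonal group O(R) is a dihedral group of order 12, R contains exactly 6 vectors of square norm 4, and the natural map O(R) → O(q_R) to the automorphism group of the discriminant form of R is an isomorphism. -/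
/-- The bilinear form with Gram matrix `[[4,2],[2,4]]` (the lattice `R`,
i.e. the root lattice `A₂` scaled by 2) on `ℚ²`. -/
def Bf (x y : Fin 2 → ℚ) : ℚ :=
  4 * x 0 * y 0 + 2 * x 0 * y 1 + 2 * x 1 * y 0 + 4 * x 1 * y 1

/-- A rational number is an integer. -/
def IsInt (q : ℚ) : Prop := ∃ n : ℤ, q = (n : ℚ)

/-- The lattice `R = ℤ² ⊂ ℚ²` (spanned by `A`, `B` with
`⟨A,A⟩ = ⟨B,B⟩ = 4`, `⟨A,B⟩ = 2`). -/
def Rlat : Set (Fin 2 → ℚ) := {x | IsInt (x 0) ∧ IsInt (x 1)}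

/-- The dual lattice `R^∨ ⊂ ℚ²`. -/
def Rdual : Set (Fin 2 → ℚ) := {x | ∀ v ∈ Rlat, IsInt (Bf x v)}

/-- The orthogonal group `O(R)`: linear automorphisms of `ℚ²` preserving the
form and the lattice. -/
def OR : Set ((Fin 2 → ℚ) ≃ₗ[ℚ] (Fin 2 → ℚ)) :=
  {g | (∀ x y, Bf (g x) (g y) = Bf x y) ∧ (∀ x, x ∈ Rlat ↔ g x ∈ Rlat)}

-- basic IsInt lemmas
lemma IsInt.add {a b : ℚ} (ha : IsInt a) (hb : IsInt b) : IsInt (a + b) := by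
  obtain ⟨m, rfl⟩ := ha; obtain ⟨n, rfl⟩ := hb; exact ⟨m + n, by push_cast; ring⟩

lemma IsInt.neg {a : ℚ} (ha : IsInt a) : IsInt (-a) := by
  obtain ⟨m, rfl⟩ := ha; exact ⟨-m, by push_cast; ring⟩

lemma IsInt.sub {a b : ℚ} (ha : IsInt a) (hb : IsInt b) : IsInt (a - b) := by
  obtain ⟨m, rfl⟩ := ha; obtain ⟨n, rfl⟩ := hb; exact ⟨m - n, by push_cast; ring⟩

lemma IsInt.mul {a b : ℚ} (ha : IsInt a) (hb : IsInt b) : IsInt (a * b) := by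
  obtain ⟨m, rfl⟩ := ha; obtain ⟨n, rfl⟩ := hb; exact ⟨m * n, by push_cast; ring⟩

lemma isInt_intCast (n : ℤ) : IsInt (n : ℚ) := ⟨n, rfl⟩

lemma notIsInt (q : ℚ) (k m : ℤ) (hq : (k : ℚ) * q = m) (h : ¬ k ∣ m) : ¬ IsInt q := by
  rintro ⟨n, rfl⟩
  exact h ⟨n, by exact_mod_cast hq.symm⟩

-- the linear map with matrix [[a,b],[c,d]]
def lmap (a b c d : ℚ) : (Fin 2 → ℚ) →ₗ[ℚ] (Fin 2 → ℚ) where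
  toFun x := ![a * x 0 + b * x 1, c * x 0 + d * x 1]
  map_add' x y := by
    funext i; fin_cases i <;> simp [Matrix.cons_val_zero, Matrix.cons_val_one] <;> ring
  map_smul' r x := by
    funext i; fin_cases i <;> simp [Matrix.cons_val_zero, Matrix.cons_val_one] <;> ring

@[simp] lemma lmap_apply (a b c d : ℚ) (x : Fin 2 → ℚ) :
    lmap a b c d x = ![a * x 0 + b * x 1, c * x 0 + d * x 1] := rfl

-- the linear equiv with matrix [[a,b],[c,d]], given det^2 = 1
def mk2 (a b c d : ℚ) (h : (a * d - b * c) * (a * d - b * c) = 1) :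
    (Fin 2 → ℚ) ≃ₗ[ℚ] (Fin 2 → ℚ) :=
  LinearEquiv.ofLinear (lmap a b c d)
    (lmap ((a*d-b*c)*d) (-((a*d-b*c)*b)) (-((a*d-b*c)*c)) ((a*d-b*c)*a))
    (by
      apply LinearMap.ext; intro x
      simp only [LinearMap.coe_comp, Function.comp_apply, lmap_apply, LinearMap.id_coe, id_eq,
        Matrix.cons_val_zero, Matrix.cons_val_one, Matrix.head_cons]
      rw [funext_iff, Fin.forall_fin_two]
      simp only [Matrix.cons_val_zero, Matrix.cons_val_one, Matrix.head_cons]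
      exact ⟨by linear_combination x 0 * h, by linear_combination x 1 * h⟩)
    (by
      apply LinearMap.ext; intro x
      simp only [LinearMap.coe_comp, Function.comp_apply, lmap_apply, LinearMap.id_coe, id_eq,
        Matrix.cons_val_zero, Matrix.cons_val_one, Matrix.head_cons]
      rw [funext_iff, Fin.forall_fin_two]
      simp only [Matrix.cons_val_zero, Matrix.cons_val_one, Matrix.head_cons]
      exact ⟨by linear_combination x 0 * h, by linear_combination x 1 * h⟩)

@[simp] lemma mk2_apply (a b c d : ℚ) (h) (x : Fin 2 → ℚ) :
    mk2 a b c d h x = ![a * x 0 + b * x 1, c * x 0 + d * x 1] := rfl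

example : True := trivial

@[simp] lemma mk2_symm_apply (a b c d : ℚ) (h) (x : Fin 2 → ℚ) :
    (mk2 a b c d h).symm x =
      ![(a*d-b*c)*d * x 0 + (-((a*d-b*c)*b)) * x 1,
        (-((a*d-b*c)*c)) * x 0 + (a*d-b*c)*a * x 1] := rfl

lemma vec_eq (x : Fin 2 → ℚ) : x = ![x 0, x 1] := by
  funext i; fin_cases i <;> rfl

lemma mem_Rlat (x : Fin 2 → ℚ) : x ∈ Rlat ↔ IsInt (x 0) ∧ IsInt (x 1) := Iff.rfl

lemma mk2_mem_OR (a b c d : ℚ) (h : (a * d - b * c) * (a * d - b * c) = 1)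
    (ia : IsInt a) (ib : IsInt b) (ic : IsInt c) (id : IsInt d)
    (e1 : a*a + a*c + c*c = 1) (e2 : b*b + b*d + d*d = 1)
    (e3 : 2*a*b + a*d + b*c + 2*c*d = 1) : mk2 a b c d h ∈ OR := by
  constructor
  · intro x y
    simp only [mk2_apply, Bf, Matrix.cons_val_zero, Matrix.cons_val_one, Matrix.head_cons]
    linear_combination (4*x 0*y 0)*e1 + (2*(x 0*y 1 + x 1*y 0))*e3 + (4*x 1*y 1)*e2
  · intro x
    constructor
    · rintro ⟨h0, h1⟩
      refine ⟨?_, ?_⟩ <;>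
        simp only [mk2_apply, Matrix.cons_val_zero, Matrix.cons_val_one, Matrix.head_cons]
      · exact (ia.mul h0).add (ib.mul h1)
      · exact (ic.mul h0).add (id.mul h1)
    · intro hg
      have hx : x = (mk2 a b c d h).symm (mk2 a b c d h x) := by
        rw [LinearEquiv.symm_apply_apply]
      obtain ⟨h0, h1⟩ := hg
      have iD : IsInt (a*d - b*c) := (ia.mul id).sub (ib.mul ic)
      rw [hx]
      refine ⟨?_, ?_⟩ <;>
        simp only [mk2_symm_apply, Matrix.cons_val_zero, Matrix.cons_val_one, Matrix.head_cons]
      · exact ((iD.mul id).mul h0).add (((iD.mul ib).neg).mul h1)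
      · exact (((iD.mul ic).neg).mul h0).add ((iD.mul ia).mul h1)

lemma isInt0 : IsInt 0 := ⟨0, by norm_num⟩
lemma isInt1 : IsInt 1 := ⟨1, by norm_num⟩
lemma isIntN1 : IsInt (-1) := ⟨-1, by norm_num⟩

-- the twelve elements of O(R)
def T0 : (Fin 2 → ℚ) ≃ₗ[ℚ] (Fin 2 → ℚ) := mk2 1 0 0 1 (by norm_num)
def T1 : (Fin 2 → ℚ) ≃ₗ[ℚ] (Fin 2 → ℚ) := mk2 0 (-1) 1 1 (by norm_num)
def T2 : (Fin 2 → ℚ) ≃ₗ[ℚ] (Fin 2 → ℚ) := mk2 (-1) (-1) 1 0 (by norm_num)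
def T3 : (Fin 2 → ℚ) ≃ₗ[ℚ] (Fin 2 → ℚ) := mk2 (-1) 0 0 (-1) (by norm_num)
def T4 : (Fin 2 → ℚ) ≃ₗ[ℚ] (Fin 2 → ℚ) := mk2 0 1 (-1) (-1) (by norm_num)
def T5 : (Fin 2 → ℚ) ≃ₗ[ℚ] (Fin 2 → ℚ) := mk2 1 1 (-1) 0 (by norm_num)
def T6 : (Fin 2 → ℚ) ≃ₗ[ℚ] (Fin 2 → ℚ) := mk2 0 1 1 0 (by norm_num)
def T7 : (Fin 2 → ℚ) ≃ₗ[ℚ] (Fin 2 → ℚ) := mk2 1 1 0 (-1) (by norm_num)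
def T8 : (Fin 2 → ℚ) ≃ₗ[ℚ] (Fin 2 → ℚ) := mk2 1 0 (-1) (-1) (by norm_num)
def T9 : (Fin 2 → ℚ) ≃ₗ[ℚ] (Fin 2 → ℚ) := mk2 0 (-1) (-1) 0 (by norm_num)
def T10 : (Fin 2 → ℚ) ≃ₗ[ℚ] (Fin 2 → ℚ) := mk2 (-1) (-1) 0 1 (by norm_num)
def T11 : (Fin 2 → ℚ) ≃ₗ[ℚ] (Fin 2 → ℚ) := mk2 (-1) 0 1 1 (by norm_num)

lemma T0_mem : T0 ∈ OR := mk2_mem_OR _ _ _ _ _ isInt1 isInt0 isInt0 isInt1 (by norm_num) (by norm_num) (by norm_num)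
lemma T1_mem : T1 ∈ OR := mk2_mem_OR _ _ _ _ _ isInt0 isIntN1 isInt1 isInt1 (by norm_num) (by norm_num) (by norm_num)
lemma T2_mem : T2 ∈ OR := mk2_mem_OR _ _ _ _ _ isIntN1 isIntN1 isInt1 isInt0 (by norm_num) (by norm_num) (by norm_num)
lemma T3_mem : T3 ∈ OR := mk2_mem_OR _ _ _ _ _ isIntN1 isInt0 isInt0 isIntN1 (by norm_num) (by norm_num) (by norm_num)
lemma T4_mem : T4 ∈ OR := mk2_mem_OR _ _ _ _ _ isInt0 isInt1 isIntN1 isIntN1 (by norm_num) (by norm_num) (by norm_num)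
lemma T5_mem : T5 ∈ OR := mk2_mem_OR _ _ _ _ _ isInt1 isInt1 isIntN1 isInt0 (by norm_num) (by norm_num) (by norm_num)
lemma T6_mem : T6 ∈ OR := mk2_mem_OR _ _ _ _ _ isInt0 isInt1 isInt1 isInt0 (by norm_num) (by norm_num) (by norm_num)
lemma T7_mem : T7 ∈ OR := mk2_mem_OR _ _ _ _ _ isInt1 isInt1 isInt0 isIntN1 (by norm_num) (by norm_num) (by norm_num)
lemma T8_mem : T8 ∈ OR := mk2_mem_OR _ _ _ _ _ isInt1 isInt0 isIntN1 isIntN1 (by norm_num) (by norm_num) (by norm_num)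
lemma T9_mem : T9 ∈ OR := mk2_mem_OR _ _ _ _ _ isInt0 isIntN1 isIntN1 isInt0 (by norm_num) (by norm_num) (by norm_num)
lemma T10_mem : T10 ∈ OR := mk2_mem_OR _ _ _ _ _ isIntN1 isIntN1 isInt0 isInt1 (by norm_num) (by norm_num) (by norm_num)
lemma T11_mem : T11 ∈ OR := mk2_mem_OR _ _ _ _ _ isIntN1 isInt0 isInt1 isInt1 (by norm_num) (by norm_num) (by norm_num)

lemma norm4_classify (x : Fin 2 → ℚ) (hx : x ∈ Rlat) (h4 : Bf x x = 4) :
    x = ![1,0] ∨ x = ![0,1] ∨ x = ![-1,0] ∨ x = ![0,-1] ∨ x = ![1,-1] ∨ x = ![-1,1] := by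
  obtain ⟨⟨m, hm⟩, ⟨n, hn⟩⟩ := hx
  have hQ : 4*(m:ℚ)*m + 2*m*n + 2*n*m + 4*n*n = 4 := by
    rw [Bf, hm, hn] at h4; linarith
  have hZ : m^2 + m*n + n^2 = 1 := by
    have : (4:ℚ)*((m^2 + m*n + n^2 : ℤ) : ℚ) = 4 * 1 := by push_cast; linarith
    exact_mod_cast mul_left_cancel₀ (by norm_num : (4:ℚ) ≠ 0) this
  have hxv : x = ![(m:ℚ), (n:ℚ)] := by
    funext i; fin_cases i <;> simp [hm, hn]
  have hn1 : -1 ≤ n := by nlinarith [sq_nonneg (2*m+n), sq_nonneg n]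
  have hn2 : n ≤ 1 := by nlinarith [sq_nonneg (2*m+n), sq_nonneg n]
  have hm1 : -1 ≤ m := by nlinarith [sq_nonneg (m+2*n), sq_nonneg m]
  have hm2 : m ≤ 1 := by nlinarith [sq_nonneg (m+2*n), sq_nonneg m]
  interval_cases m <;> interval_cases n <;> revert hZ <;> first
    | (intro _; exfalso; omega)
    | (intro _; rw [hxv]; norm_num)

lemma ext_basis (g t : (Fin 2 → ℚ) ≃ₗ[ℚ] (Fin 2 → ℚ))
    (h0 : g ![1,0] = t ![1,0]) (h1 : g ![0,1] = t ![0,1]) : g = t := by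
  apply LinearEquiv.toLinearMap_injective; apply LinearMap.ext; intro x
  have hx : x = x 0 • ![1,0] + x 1 • ![0,1] := by funext i; fin_cases i <;> simp
  simp only [LinearEquiv.coe_coe]
  rw [hx]; simp only [map_add, map_smul, h0, h1]

lemma mem_OR_classify (g : (Fin 2 → ℚ) ≃ₗ[ℚ] (Fin 2 → ℚ)) (hg : g ∈ OR) :
    g = T0 ∨ g = T1 ∨ g = T2 ∨ g = T3 ∨ g = T4 ∨ g = T5 ∨ g = T6 ∨ g = T7 ∨
    g = T8 ∨ g = T9 ∨ g = T10 ∨ g = T11 := by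
  obtain ⟨hform, hlat⟩ := hg
  have he0 : (![1,0] : Fin 2 → ℚ) ∈ Rlat := ⟨⟨1, by norm_num⟩, ⟨0, by norm_num⟩⟩
  have he1 : (![0,1] : Fin 2 → ℚ) ∈ Rlat := ⟨⟨0, by norm_num⟩, ⟨1, by norm_num⟩⟩
  have hu := norm4_classify (g ![1,0]) ((hlat _).mp he0) (by rw [hform]; norm_num [Bf])
  have hv := norm4_classify (g ![0,1]) ((hlat _).mp he1) (by rw [hform]; norm_num [Bf])
  have hBf : Bf (g ![1,0]) (g ![0,1]) = 2 := by rw [hform]; norm_num [Bf]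
  rcases hu with h|h|h|h|h|h <;> rcases hv with h'|h'|h'|h'|h'|h'
  · exfalso; rw [h, h'] at hBf; norm_num [Bf] at hBf
  · exact Or.inl (ext_basis g T0 (by rw [h]; norm_num [T0]) (by rw [h']; norm_num [T0]))
  · exfalso; rw [h, h'] at hBf; norm_num [Bf] at hBf
  · exfalso; rw [h, h'] at hBf; norm_num [Bf] at hBf
  · exact Or.inr (Or.inr (Or.inr (Or.inr (Or.inr (Or.inr (Or.inr (Or.inl (ext_basis g T7 (by rw [h]; norm_num [T7]) (by rw [h']; norm_num [T7])))))))))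
  · exfalso; rw [h, h'] at hBf; norm_num [Bf] at hBf
  · exact Or.inr (Or.inr (Or.inr (Or.inr (Or.inr (Or.inr (Or.inl (ext_basis g T6 (by rw [h]; norm_num [T6]) (by rw [h']; norm_num [T6]))))))))
  · exfalso; rw [h, h'] at hBf; norm_num [Bf] at hBf
  · exfalso; rw [h, h'] at hBf; norm_num [Bf] at hBf
  · exfalso; rw [h, h'] at hBf; norm_num [Bf] at hBf
  · exfalso; rw [h, h'] at hBf; norm_num [Bf] at hBf
  · exact Or.inr (Or.inl (ext_basis g T1 (by rw [h]; norm_num [T1]) (by rw [h']; norm_num [T1])))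
  · exfalso; rw [h, h'] at hBf; norm_num [Bf] at hBf
  · exfalso; rw [h, h'] at hBf; norm_num [Bf] at hBf
  · exfalso; rw [h, h'] at hBf; norm_num [Bf] at hBf
  · exact Or.inr (Or.inr (Or.inr (Or.inl (ext_basis g T3 (by rw [h]; norm_num [T3]) (by rw [h']; norm_num [T3])))))
  · exfalso; rw [h, h'] at hBf; norm_num [Bf] at hBf
  · exact Or.inr (Or.inr (Or.inr (Or.inr (Or.inr (Or.inr (Or.inr (Or.inr (Or.inr (Or.inr (Or.inl (ext_basis g T10 (by rw [h]; norm_num [T10]) (by rw [h']; norm_num [T10]))))))))))))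
  · exfalso; rw [h, h'] at hBf; norm_num [Bf] at hBf
  · exfalso; rw [h, h'] at hBf; norm_num [Bf] at hBf
  · exact Or.inr (Or.inr (Or.inr (Or.inr (Or.inr (Or.inr (Or.inr (Or.inr (Or.inr (Or.inl (ext_basis g T9 (by rw [h]; norm_num [T9]) (by rw [h']; norm_num [T9])))))))))))
  · exfalso; rw [h, h'] at hBf; norm_num [Bf] at hBf
  · exact Or.inr (Or.inr (Or.inr (Or.inr (Or.inl (ext_basis g T4 (by rw [h]; norm_num [T4]) (by rw [h']; norm_num [T4]))))))
  · exfalso; rw [h, h'] at hBf; norm_num [Bf] at hBf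
  · exact Or.inr (Or.inr (Or.inr (Or.inr (Or.inr (Or.inl (ext_basis g T5 (by rw [h]; norm_num [T5]) (by rw [h']; norm_num [T5])))))))
  · exfalso; rw [h, h'] at hBf; norm_num [Bf] at hBf
  · exfalso; rw [h, h'] at hBf; norm_num [Bf] at hBf
  · exact Or.inr (Or.inr (Or.inr (Or.inr (Or.inr (Or.inr (Or.inr (Or.inr (Or.inl (ext_basis g T8 (by rw [h]; norm_num [T8]) (by rw [h']; norm_num [T8]))))))))))
  · exfalso; rw [h, h'] at hBf; norm_num [Bf] at hBf
  · exfalso; rw [h, h'] at hBf; norm_num [Bf] at hBf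
  · exfalso; rw [h, h'] at hBf; norm_num [Bf] at hBf
  · exact Or.inr (Or.inr (Or.inr (Or.inr (Or.inr (Or.inr (Or.inr (Or.inr (Or.inr (Or.inr (Or.inr (ext_basis g T11 (by rw [h]; norm_num [T11]) (by rw [h']; norm_num [T11]))))))))))))
  · exact Or.inr (Or.inr (Or.inl (ext_basis g T2 (by rw [h]; norm_num [T2]) (by rw [h']; norm_num [T2]))))
  · exfalso; rw [h, h'] at hBf; norm_num [Bf] at hBf
  · exfalso; rw [h, h'] at hBf; norm_num [Bf] at hBf
  · exfalso; rw [h, h'] at hBf; norm_num [Bf] at hBf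

@[simp] lemma LE_mul_apply (f g : (Fin 2 → ℚ) ≃ₗ[ℚ] (Fin 2 → ℚ)) (x : Fin 2 → ℚ) :
    (f * g) x = f (g x) := rfl

lemma T0_eq_one : T0 = 1 := by
  refine ext_basis _ _ ?_ ?_ <;> · show _ = _; norm_num [T0]

lemma mul_T1_T1 : T1 * T1 = T2 :=
  ext_basis _ _ (by norm_num [T1, T2]) (by norm_num [T1, T2])
lemma mul_T2_T1 : T2 * T1 = T3 :=
  ext_basis _ _ (by norm_num [T1, T2, T3]) (by norm_num [T1, T2, T3])
lemma mul_T3_T1 : T3 * T1 = T4 :=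
  ext_basis _ _ (by norm_num [T1, T3, T4]) (by norm_num [T1, T3, T4])
lemma mul_T4_T1 : T4 * T1 = T5 :=
  ext_basis _ _ (by norm_num [T1, T4, T5]) (by norm_num [T1, T4, T5])
lemma mul_T5_T1 : T5 * T1 = T0 :=
  ext_basis _ _ (by norm_num [T1, T5, T0]) (by norm_num [T1, T5, T0])

lemma pow_T1_2 : T1^2 = T2 := by rw [pow_succ, pow_one, mul_T1_T1]
lemma pow_T1_3 : T1^3 = T3 := by rw [pow_succ, pow_T1_2, mul_T2_T1]
lemma pow_T1_4 : T1^4 = T4 := by rw [pow_succ, pow_T1_3, mul_T3_T1]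
lemma pow_T1_5 : T1^5 = T5 := by rw [pow_succ, pow_T1_4, mul_T4_T1]
lemma pow_T1_6 : T1^6 = 1 := by rw [pow_succ, pow_T1_5, mul_T5_T1, T0_eq_one]

lemma mul_T6_T1 : T6 * T1 = T7 :=
  ext_basis _ _ (by norm_num [T1, T6, T7]) (by norm_num [T1, T6, T7])
lemma mul_T7_T1 : T7 * T1 = T8 :=
  ext_basis _ _ (by norm_num [T1, T7, T8]) (by norm_num [T1, T7, T8])
lemma mul_T8_T1 : T8 * T1 = T9 :=
  ext_basis _ _ (by norm_num [T1, T8, T9]) (by norm_num [T1, T8, T9])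
lemma mul_T9_T1 : T9 * T1 = T10 :=
  ext_basis _ _ (by norm_num [T1, T9, T10]) (by norm_num [T1, T9, T10])
lemma mul_T10_T1 : T10 * T1 = T11 :=
  ext_basis _ _ (by norm_num [T1, T10, T11]) (by norm_num [T1, T10, T11])

lemma mul_T6_T2 : T6 * T2 = T8 :=
  ext_basis _ _ (by norm_num [T2, T6, T8]) (by norm_num [T2, T6, T8])
lemma mul_T6_T3 : T6 * T3 = T9 :=
  ext_basis _ _ (by norm_num [T3, T6, T9]) (by norm_num [T3, T6, T9])
lemma mul_T6_T4 : T6 * T4 = T10 :=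
  ext_basis _ _ (by norm_num [T4, T6, T10]) (by norm_num [T4, T6, T10])
lemma mul_T6_T5 : T6 * T5 = T11 :=
  ext_basis _ _ (by norm_num [T5, T6, T11]) (by norm_num [T5, T6, T11])

lemma mul_T1_T6_T1 : T1 * T6 * T1 = T6 :=
  ext_basis _ _ (by norm_num [T1, T6]) (by norm_num [T1, T6])

lemma sigma_conj (k : ℕ) : T1^k * T6 * T1^k = T6 := by
  induction k with
  | zero => simp
  | succ n ih =>
    have : T1^(n+1) * T6 * T1^(n+1) = T1 * (T1^n * T6 * T1^n) * T1 := by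
      group
    rw [this, ih, mul_T1_T6_T1]

lemma pow_mul_T6 (k : ℕ) : T1^k * T6 = T6 * (T1^k)⁻¹ :=
  eq_mul_inv_iff_mul_eq.mpr (sigma_conj k)


lemma mul_T6_T6 : T6 * T6 = 1 := by
  rw [← T0_eq_one]
  exact ext_basis _ _ (by norm_num [T6, T0]) (by norm_num [T6, T0])

lemma zpow_T1_eq (m n : ℤ) (h : (m : ZMod 6) = n) : T1^m = T1^n := by
  have h1 : orderOf T1 ∣ 6 := orderOf_dvd_of_pow_eq_one pow_T1_6
  have h2 : (6:ℤ) ∣ m - n := by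
    have := (ZMod.intCast_zmod_eq_zero_iff_dvd (m-n) 6).mp (by push_cast; rw [h]; ring)
    exact_mod_cast this
  refine zpow_eq_zpow_iff_modEq.mpr ?_
  have h3 : ((orderOf T1 : ℕ) : ℤ) ∣ m - n := dvd_trans (by exact_mod_cast h1) h2
  exact Int.ModEq.symm (Int.modEq_iff_dvd.mpr h3)

lemma val_zmod_cast (x : ZMod 6) : ((x.val : ZMod 6)) = x := by
  simp [ZMod.natCast_val, ZMod.cast_id]

/-- The monoid hom from the dihedral group of order 12. -/
def Fdih : DihedralGroup 6 →* ((Fin 2 → ℚ) ≃ₗ[ℚ] (Fin 2 → ℚ)) where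
  toFun g := match g with
    | DihedralGroup.r i => T1 ^ (i.val : ℤ)
    | DihedralGroup.sr i => T6 * T1 ^ (i.val : ℤ)
  map_one' := by
    show T1 ^ (((0 : ZMod 6).val : ℤ)) = 1
    norm_num [ZMod.val_zero]
  map_mul' := by
    have hp : ∀ i : ZMod 6, T1 ^ ((i.val : ℤ)) * T6 = T6 * (T1 ^ ((i.val : ℤ)))⁻¹ := by
      intro i; rw [zpow_natCast]; exact pow_mul_T6 i.val
    rintro (i | i) (j | j)
    · show T1 ^ (((i+j).val : ℤ)) = T1 ^ ((i.val : ℤ)) * T1 ^ ((j.val : ℤ))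
      rw [← zpow_add, zpow_T1_eq ((i+j).val : ℤ) (i.val + j.val : ℤ)
        (by push_cast; simp [val_zmod_cast])]
    · show T6 * T1 ^ (((j-i).val : ℤ)) = T1 ^ ((i.val : ℤ)) * (T6 * T1 ^ ((j.val : ℤ)))
      rw [← mul_assoc, hp i, mul_assoc, ← zpow_neg, ← zpow_add]
      rw [zpow_T1_eq ((j-i).val : ℤ) (-(i.val : ℤ) + j.val : ℤ)
        (by push_cast; simp [val_zmod_cast]; ring)]
    · show T6 * T1 ^ (((i+j).val : ℤ)) = T6 * T1 ^ ((i.val : ℤ)) * T1 ^ ((j.val : ℤ))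
      rw [mul_assoc, ← zpow_add, zpow_T1_eq ((i+j).val : ℤ) (i.val + j.val : ℤ)
        (by push_cast; simp [val_zmod_cast])]
    · show T1 ^ (((j-i).val : ℤ)) = T6 * T1 ^ ((i.val : ℤ)) * (T6 * T1 ^ ((j.val : ℤ)))
      have hre : T6 * T1 ^ ((i.val:ℤ)) * (T6 * T1 ^ ((j.val:ℤ)))
          = T6 * (T1 ^ ((i.val:ℤ)) * T6) * T1 ^ ((j.val:ℤ)) := by group
      rw [hre, hp i, ← mul_assoc, mul_T6_T6, one_mul, ← zpow_neg, ← zpow_add]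
      rw [zpow_T1_eq ((j-i).val : ℤ) (-(i.val : ℤ) + j.val : ℤ)
        (by push_cast; simp [val_zmod_cast]; ring)]

lemma T1_ne_one : T1 ≠ 1 := by
  intro h
  have h2 : T1 (![1,0] : Fin 2 → ℚ) = ![1,0] := by rw [h]; rfl
  have h3 := congrFun h2 0
  norm_num [T1] at h3

lemma T2_ne_one : T2 ≠ 1 := by
  intro h
  have h2 : T2 (![1,0] : Fin 2 → ℚ) = ![1,0] := by rw [h]; rfl
  have h3 := congrFun h2 0
  norm_num [T2] at h3

lemma T3_ne_one : T3 ≠ 1 := by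
  intro h
  have h2 : T3 (![1,0] : Fin 2 → ℚ) = ![1,0] := by rw [h]; rfl
  have h3 := congrFun h2 0
  norm_num [T3] at h3

lemma T4_ne_one : T4 ≠ 1 := by
  intro h
  have h2 : T4 (![1,0] : Fin 2 → ℚ) = ![1,0] := by rw [h]; rfl
  have h3 := congrFun h2 0
  norm_num [T4] at h3

lemma T5_ne_one : T5 ≠ 1 := by
  intro h
  have h2 : T5 (![1,0] : Fin 2 → ℚ) = ![1,0] := by rw [h]; rfl
  have h3 := congrFun h2 1
  norm_num [T5] at h3

lemma T6_ne_one : T6 ≠ 1 := by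
  intro h
  have h2 : T6 (![1,0] : Fin 2 → ℚ) = ![1,0] := by rw [h]; rfl
  have h3 := congrFun h2 0
  norm_num [T6] at h3

lemma T7_ne_one : T7 ≠ 1 := by
  intro h
  have h2 : T7 (![0,1] : Fin 2 → ℚ) = ![0,1] := by rw [h]; rfl
  have h3 := congrFun h2 1
  norm_num [T7] at h3

lemma T8_ne_one : T8 ≠ 1 := by
  intro h
  have h2 : T8 (![1,0] : Fin 2 → ℚ) = ![1,0] := by rw [h]; rfl
  have h3 := congrFun h2 1
  norm_num [T8] at h3

lemma T9_ne_one : T9 ≠ 1 := by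
  intro h
  have h2 : T9 (![1,0] : Fin 2 → ℚ) = ![1,0] := by rw [h]; rfl
  have h3 := congrFun h2 0
  norm_num [T9] at h3

lemma T10_ne_one : T10 ≠ 1 := by
  intro h
  have h2 : T10 (![1,0] : Fin 2 → ℚ) = ![1,0] := by rw [h]; rfl
  have h3 := congrFun h2 0
  norm_num [T10] at h3

lemma T11_ne_one : T11 ≠ 1 := by
  intro h
  have h2 : T11 (![1,0] : Fin 2 → ℚ) = ![1,0] := by rw [h]; rfl
  have h3 := congrFun h2 0
  norm_num [T11] at h3

lemma OR_one : (1 : (Fin 2 → ℚ) ≃ₗ[ℚ] (Fin 2 → ℚ)) ∈ OR :=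
  ⟨fun x y => rfl, fun x => Iff.rfl⟩

lemma OR_mul {g h : (Fin 2 → ℚ) ≃ₗ[ℚ] (Fin 2 → ℚ)} (hg : g ∈ OR) (hh : h ∈ OR) :
    g * h ∈ OR := by
  obtain ⟨hg1, hg2⟩ := hg
  obtain ⟨hh1, hh2⟩ := hh
  refine ⟨fun x y => ?_, fun x => ?_⟩
  · rw [LE_mul_apply, LE_mul_apply, hg1, hh1]
  · rw [LE_mul_apply, ← hg2, ← hh2]

lemma OR_pow {g : (Fin 2 → ℚ) ≃ₗ[ℚ] (Fin 2 → ℚ)} (hg : g ∈ OR) (k : ℕ) : g ^ k ∈ OR := by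
  induction k with
  | zero => simpa using OR_one
  | succ n ih => rw [pow_succ]; exact OR_mul ih hg

lemma Fdih_r_val (k : ℕ) (i : ZMod 6) (h : i.val = k) : Fdih (DihedralGroup.r i) = T1 ^ k := by
  show T1 ^ ((i.val:ℤ)) = T1 ^ k
  rw [h, zpow_natCast]

lemma Fdih_sr_val (k : ℕ) (i : ZMod 6) (h : i.val = k) :
    Fdih (DihedralGroup.sr i) = T6 * T1 ^ k := by
  show T6 * T1 ^ ((i.val:ℤ)) = T6 * T1 ^ k
  rw [h, zpow_natCast]

lemma Fdih_inj : Function.Injective Fdih := by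
  rw [injective_iff_map_eq_one]
  rintro (i | i) h
  · have hv := i.val_lt
    have hne : ¬ i.val ≠ 0 := by
      intro hvne
      interval_cases hk : i.val
      · exact hvne rfl
      · rw [Fdih_r_val 1 i hk, pow_one] at h; exact T1_ne_one h
      · rw [Fdih_r_val 2 i hk, pow_T1_2] at h; exact T2_ne_one h
      · rw [Fdih_r_val 3 i hk, pow_T1_3] at h; exact T3_ne_one h
      · rw [Fdih_r_val 4 i hk, pow_T1_4] at h; exact T4_ne_one h
      · rw [Fdih_r_val 5 i hk, pow_T1_5] at h; exact T5_ne_one h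
    push_neg at hne
    rw [show i = 0 from (ZMod.val_eq_zero i).mp hne]
    rfl
  · exfalso
    have hv := i.val_lt
    interval_cases hk : i.val
    · rw [Fdih_sr_val 0 i hk, pow_zero, mul_one] at h; exact T6_ne_one h
    · rw [Fdih_sr_val 1 i hk, pow_one, mul_T6_T1] at h; exact T7_ne_one h
    · rw [Fdih_sr_val 2 i hk, pow_T1_2, mul_T6_T2] at h; exact T8_ne_one h
    · rw [Fdih_sr_val 3 i hk, pow_T1_3, mul_T6_T3] at h; exact T9_ne_one h
    · rw [Fdih_sr_val 4 i hk, pow_T1_4, mul_T6_T4] at h; exact T10_ne_one h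
    · rw [Fdih_sr_val 5 i hk, pow_T1_5, mul_T6_T5] at h; exact T11_ne_one h

lemma Fdih_range : Set.range Fdih = OR := by
  ext g
  constructor
  · rintro ⟨(i | i), rfl⟩
    · show T1 ^ ((i.val:ℤ)) ∈ OR
      rw [zpow_natCast]
      exact OR_pow T1_mem i.val
    · show T6 * T1 ^ ((i.val:ℤ)) ∈ OR
      rw [zpow_natCast]
      exact OR_mul T6_mem (OR_pow T1_mem i.val)
  · intro hg
    rcases mem_OR_classify g hg with h|h|h|h|h|h|h|h|h|h|h|h <;> subst h
    · exact ⟨DihedralGroup.r 0, by rw [Fdih_r_val 0 0 rfl, pow_zero, T0_eq_one]⟩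
    · exact ⟨DihedralGroup.r 1, by rw [Fdih_r_val 1 1 rfl, pow_one]⟩
    · exact ⟨DihedralGroup.r 2, by rw [Fdih_r_val 2 2 rfl, pow_T1_2]⟩
    · exact ⟨DihedralGroup.r 3, by rw [Fdih_r_val 3 3 rfl, pow_T1_3]⟩
    · exact ⟨DihedralGroup.r 4, by rw [Fdih_r_val 4 4 rfl, pow_T1_4]⟩
    · exact ⟨DihedralGroup.r 5, by rw [Fdih_r_val 5 5 rfl, pow_T1_5]⟩
    · exact ⟨DihedralGroup.sr 0, by rw [Fdih_sr_val 0 0 rfl, pow_zero, mul_one]⟩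
    · exact ⟨DihedralGroup.sr 1, by rw [Fdih_sr_val 1 1 rfl, pow_one, mul_T6_T1]⟩
    · exact ⟨DihedralGroup.sr 2, by rw [Fdih_sr_val 2 2 rfl, pow_T1_2, mul_T6_T2]⟩
    · exact ⟨DihedralGroup.sr 3, by rw [Fdih_sr_val 3 3 rfl, pow_T1_3, mul_T6_T3]⟩
    · exact ⟨DihedralGroup.sr 4, by rw [Fdih_sr_val 4 4 rfl, pow_T1_4, mul_T6_T4]⟩
    · exact ⟨DihedralGroup.sr 5, by rw [Fdih_sr_val 5 5 rfl, pow_T1_5, mul_T6_T5]⟩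

lemma card_OR : Nat.card ↥OR = 12 := by
  rw [← Fdih_range, Nat.card_range_of_injective Fdih_inj, Nat.card_eq_fintype_card,
    DihedralGroup.card]

lemma card_norm4 : Nat.card {x : Fin 2 → ℚ // x ∈ Rlat ∧ Bf x x = 4} = 6 := by
  classical
  have hset : {x : Fin 2 → ℚ | x ∈ Rlat ∧ Bf x x = 4} =
      (↑({![1,0], ![0,1], ![-1,0], ![0,-1], ![1,-1], ![-1,1]} :
        Finset (Fin 2 → ℚ)) : Set (Fin 2 → ℚ)) := by
    ext x
    simp only [Set.mem_setOf_eq, Finset.coe_insert, Set.mem_insert_iff,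
      Finset.coe_singleton, Set.mem_singleton_iff]
    constructor
    · rintro ⟨h1, h2⟩
      exact norm4_classify x h1 h2
    · rintro (rfl|rfl|rfl|rfl|rfl|rfl) <;>
        (refine ⟨⟨?_, ?_⟩, by norm_num [Bf]⟩ <;>
          first | exact isInt0 | exact isInt1 | exact isIntN1)
  have : {x : Fin 2 → ℚ // x ∈ Rlat ∧ Bf x x = 4} =
      {x : Fin 2 → ℚ // x ∈ {x : Fin 2 → ℚ | x ∈ Rlat ∧ Bf x x = 4}} := rfl
  rw [this, hset, Nat.card_coe_set_eq, Set.ncard_coe_finset]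
  decide

/-- dual basis vectors -/
noncomputable def fd1 : Fin 2 → ℚ := ![1/3, -1/6]
noncomputable def fd2 : Fin 2 → ℚ := ![-1/6, 1/3]

lemma mem_Rdual_iff (x : Fin 2 → ℚ) :
    x ∈ Rdual ↔ IsInt (4*x 0 + 2*x 1) ∧ IsInt (2*x 0 + 4*x 1) := by
  constructor
  · intro hx
    constructor
    · have := hx ![1,0] ⟨isInt1, isInt0⟩
      simpa [Bf] using this
    · have := hx ![0,1] ⟨isInt0, isInt1⟩
      simpa [Bf] using this
  · rintro ⟨h1, h2⟩ v ⟨hv0, hv1⟩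
    have : Bf x v = (4*x 0 + 2*x 1) * v 0 + (2*x 0 + 4*x 1) * v 1 := by
      rw [Bf]; ring
    rw [this]
    exact (h1.mul hv0).add (h2.mul hv1)

lemma fd1_mem : fd1 ∈ Rdual := by
  rw [mem_Rdual_iff]
  constructor
  · convert isInt1 using 1; norm_num [fd1]
  · convert isInt0 using 1; norm_num [fd1]

lemma fd2_mem : fd2 ∈ Rdual := by
  rw [mem_Rdual_iff]
  constructor
  · convert isInt0 using 1; norm_num [fd2]
  · convert isInt1 using 1; norm_num [fd2]

lemma Rlat_subset_Rdual : Rlat ⊆ Rdual := by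
  rintro x ⟨h0, h1⟩
  rw [mem_Rdual_iff]
  have i4 : IsInt 4 := ⟨4, by norm_num⟩
  have i2 : IsInt 2 := ⟨2, by norm_num⟩
  exact ⟨(i4.mul h0).add (i2.mul h1), (i2.mul h0).add (i4.mul h1)⟩

lemma Rdual_add {x y : Fin 2 → ℚ} (hx : x ∈ Rdual) (hy : y ∈ Rdual) : x + y ∈ Rdual := by
  rw [mem_Rdual_iff] at *
  obtain ⟨h1, h2⟩ := hx; obtain ⟨h3, h4⟩ := hy
  constructor
  · convert h1.add h3 using 1; simp; ring
  · convert h2.add h4 using 1; simp; ring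

lemma Rdual_neg {x : Fin 2 → ℚ} (hx : x ∈ Rdual) : -x ∈ Rdual := by
  rw [mem_Rdual_iff] at *
  obtain ⟨h1, h2⟩ := hx
  constructor
  · convert h1.neg using 1; simp; ring
  · convert h2.neg using 1; simp; ring

lemma Rdual_sub {x y : Fin 2 → ℚ} (hx : x ∈ Rdual) (hy : y ∈ Rdual) : x - y ∈ Rdual := by
  rw [sub_eq_add_neg]; exact Rdual_add hx (Rdual_neg hy)

lemma Rdual_zero : (0 : Fin 2 → ℚ) ∈ Rdual := by
  rw [mem_Rdual_iff]; constructor <;> · convert isInt0 using 1; simp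

lemma Rdual_zsmul {x : Fin 2 → ℚ} (hx : x ∈ Rdual) (n : ℤ) : (n:ℚ) • x ∈ Rdual := by
  rw [mem_Rdual_iff] at *
  obtain ⟨h1, h2⟩ := hx
  constructor
  · convert (isInt_intCast n).mul h1 using 1; simp; ring
  · convert (isInt_intCast n).mul h2 using 1; simp; ring

lemma coords_Rdual {x : Fin 2 → ℚ} (hx : x ∈ Rdual) :
    ∃ s t : ℤ, x = (s:ℚ) • fd1 + (t:ℚ) • fd2 := by
  rw [mem_Rdual_iff] at hx
  obtain ⟨⟨s, hs⟩, ⟨t, ht⟩⟩ := hx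
  refine ⟨s, t, ?_⟩
  funext i; fin_cases i <;>
    · simp [fd1, fd2]
      linarith

lemma OR_preserves_Rdual : ∀ g ∈ OR, ∀ x ∈ Rdual, g x ∈ Rdual := by
  intro g hg x hx v hv
  have hv' : g.symm v ∈ Rlat := by
    rw [hg.2 (g.symm v), LinearEquiv.apply_symm_apply]
    exact hv
  have : Bf (g x) v = Bf x (g.symm v) := by
    conv_lhs => rw [← LinearEquiv.apply_symm_apply g v]
    rw [hg.1]
  rw [this]
  exact hx _ hv'

lemma comb_mem_Rlat (u v : ℤ) (h1 : (6:ℤ) ∣ 2*u - v) (h2 : (6:ℤ) ∣ 2*v - u) :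
    (u:ℚ) • fd1 + (v:ℚ) • fd2 ∈ Rlat := by
  obtain ⟨k1, hk1⟩ := h1
  obtain ⟨k2, hk2⟩ := h2
  constructor
  · refine ⟨k1, ?_⟩
    have : ((u:ℚ) • fd1 + (v:ℚ) • fd2) 0 = (2*(u:ℚ) - v)/6 := by
      simp [fd1, fd2]; ring
    rw [this]
    have : (2*(u:ℚ) - v) = 6 * k1 := by exact_mod_cast hk1
    rw [this]; ring
  · refine ⟨k2, ?_⟩
    have : ((u:ℚ) • fd1 + (v:ℚ) • fd2) 1 = (2*(v:ℚ) - u)/6 := by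
      simp [fd1, fd2]; ring
    rw [this]
    have : (2*(v:ℚ) - u) = 6 * k2 := by exact_mod_cast hk2
    rw [this]; ring

lemma T0_fd1 : T0 fd1 = ((1:ℤ):ℚ) • fd1 + ((0:ℤ):ℚ) • fd2 := by
  funext i; fin_cases i <;> norm_num [T0, fd1, fd2]
lemma T0_fd2 : T0 fd2 = ((0:ℤ):ℚ) • fd1 + ((1:ℤ):ℚ) • fd2 := by
  funext i; fin_cases i <;> norm_num [T0, fd1, fd2]

lemma T1_fd1 : T1 fd1 = ((1:ℤ):ℚ) • fd1 + ((1:ℤ):ℚ) • fd2 := by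
  funext i; fin_cases i <;> norm_num [T1, fd1, fd2]
lemma T1_fd2 : T1 fd2 = ((-1:ℤ):ℚ) • fd1 + ((0:ℤ):ℚ) • fd2 := by
  funext i; fin_cases i <;> norm_num [T1, fd1, fd2]

lemma T2_fd1 : T2 fd1 = ((0:ℤ):ℚ) • fd1 + ((1:ℤ):ℚ) • fd2 := by
  funext i; fin_cases i <;> norm_num [T2, fd1, fd2]
lemma T2_fd2 : T2 fd2 = ((-1:ℤ):ℚ) • fd1 + ((-1:ℤ):ℚ) • fd2 := by
  funext i; fin_cases i <;> norm_num [T2, fd1, fd2]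

lemma T3_fd1 : T3 fd1 = ((-1:ℤ):ℚ) • fd1 + ((0:ℤ):ℚ) • fd2 := by
  funext i; fin_cases i <;> norm_num [T3, fd1, fd2]
lemma T3_fd2 : T3 fd2 = ((0:ℤ):ℚ) • fd1 + ((-1:ℤ):ℚ) • fd2 := by
  funext i; fin_cases i <;> norm_num [T3, fd1, fd2]

lemma T4_fd1 : T4 fd1 = ((-1:ℤ):ℚ) • fd1 + ((-1:ℤ):ℚ) • fd2 := by
  funext i; fin_cases i <;> norm_num [T4, fd1, fd2]
lemma T4_fd2 : T4 fd2 = ((1:ℤ):ℚ) • fd1 + ((0:ℤ):ℚ) • fd2 := by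
  funext i; fin_cases i <;> norm_num [T4, fd1, fd2]

lemma T5_fd1 : T5 fd1 = ((0:ℤ):ℚ) • fd1 + ((-1:ℤ):ℚ) • fd2 := by
  funext i; fin_cases i <;> norm_num [T5, fd1, fd2]
lemma T5_fd2 : T5 fd2 = ((1:ℤ):ℚ) • fd1 + ((1:ℤ):ℚ) • fd2 := by
  funext i; fin_cases i <;> norm_num [T5, fd1, fd2]

lemma T6_fd1 : T6 fd1 = ((0:ℤ):ℚ) • fd1 + ((1:ℤ):ℚ) • fd2 := by
  funext i; fin_cases i <;> norm_num [T6, fd1, fd2]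
lemma T6_fd2 : T6 fd2 = ((1:ℤ):ℚ) • fd1 + ((0:ℤ):ℚ) • fd2 := by
  funext i; fin_cases i <;> norm_num [T6, fd1, fd2]

lemma T7_fd1 : T7 fd1 = ((1:ℤ):ℚ) • fd1 + ((1:ℤ):ℚ) • fd2 := by
  funext i; fin_cases i <;> norm_num [T7, fd1, fd2]
lemma T7_fd2 : T7 fd2 = ((0:ℤ):ℚ) • fd1 + ((-1:ℤ):ℚ) • fd2 := by
  funext i; fin_cases i <;> norm_num [T7, fd1, fd2]

lemma T8_fd1 : T8 fd1 = ((1:ℤ):ℚ) • fd1 + ((0:ℤ):ℚ) • fd2 := by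
  funext i; fin_cases i <;> norm_num [T8, fd1, fd2]
lemma T8_fd2 : T8 fd2 = ((-1:ℤ):ℚ) • fd1 + ((-1:ℤ):ℚ) • fd2 := by
  funext i; fin_cases i <;> norm_num [T8, fd1, fd2]

lemma T9_fd1 : T9 fd1 = ((0:ℤ):ℚ) • fd1 + ((-1:ℤ):ℚ) • fd2 := by
  funext i; fin_cases i <;> norm_num [T9, fd1, fd2]
lemma T9_fd2 : T9 fd2 = ((-1:ℤ):ℚ) • fd1 + ((0:ℤ):ℚ) • fd2 := by
  funext i; fin_cases i <;> norm_num [T9, fd1, fd2]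

lemma T10_fd1 : T10 fd1 = ((-1:ℤ):ℚ) • fd1 + ((-1:ℤ):ℚ) • fd2 := by
  funext i; fin_cases i <;> norm_num [T10, fd1, fd2]
lemma T10_fd2 : T10 fd2 = ((0:ℤ):ℚ) • fd1 + ((1:ℤ):ℚ) • fd2 := by
  funext i; fin_cases i <;> norm_num [T10, fd1, fd2]

lemma T11_fd1 : T11 fd1 = ((-1:ℤ):ℚ) • fd1 + ((0:ℤ):ℚ) • fd2 := by
  funext i; fin_cases i <;> norm_num [T11, fd1, fd2]
lemma T11_fd2 : T11 fd2 = ((1:ℤ):ℚ) • fd1 + ((1:ℤ):ℚ) • fd2 := by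
  funext i; fin_cases i <;> norm_num [T11, fd1, fd2]

lemma OR_id_of_fix (g : (Fin 2 → ℚ) ≃ₗ[ℚ] (Fin 2 → ℚ)) (hg : g ∈ OR)
    (h1 : g fd1 - fd1 ∈ Rlat) (h2 : g fd2 - fd2 ∈ Rlat) : g = 1 := by
  rcases mem_OR_classify g hg with h|h|h|h|h|h|h|h|h|h|h|h <;> subst h
  · exact T0_eq_one
  · exfalso
    have hc := h1.1
    have hval : (T1 fd1 - fd1) 0 = -1/6 := by
      norm_num [T1, fd1, fd2]
    rw [hval] at hc
    exact notIsInt (-1/6) 6 (-1) (by norm_num) (by decide) hc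
  · exfalso
    have hc := h1.1
    have hval : (T2 fd1 - fd1) 0 = -1/2 := by
      norm_num [T2, fd1, fd2]
    rw [hval] at hc
    exact notIsInt (-1/2) 2 (-1) (by norm_num) (by decide) hc
  · exfalso
    have hc := h1.1
    have hval : (T3 fd1 - fd1) 0 = -2/3 := by
      norm_num [T3, fd1, fd2]
    rw [hval] at hc
    exact notIsInt (-2/3) 3 (-2) (by norm_num) (by decide) hc
  · exfalso
    have hc := h1.1
    have hval : (T4 fd1 - fd1) 0 = -1/2 := by
      norm_num [T4, fd1, fd2]
    rw [hval] at hc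
    exact notIsInt (-1/2) 2 (-1) (by norm_num) (by decide) hc
  · exfalso
    have hc := h1.1
    have hval : (T5 fd1 - fd1) 0 = -1/6 := by
      norm_num [T5, fd1, fd2]
    rw [hval] at hc
    exact notIsInt (-1/6) 6 (-1) (by norm_num) (by decide) hc
  · exfalso
    have hc := h1.1
    have hval : (T6 fd1 - fd1) 0 = -1/2 := by
      norm_num [T6, fd1, fd2]
    rw [hval] at hc
    exact notIsInt (-1/2) 2 (-1) (by norm_num) (by decide) hc
  · exfalso
    have hc := h1.1
    have hval : (T7 fd1 - fd1) 0 = -1/6 := by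
      norm_num [T7, fd1, fd2]
    rw [hval] at hc
    exact notIsInt (-1/6) 6 (-1) (by norm_num) (by decide) hc
  · exfalso
    have hc := h2.2
    have hval : (T8 fd2 - fd2) 1 = -1/2 := by
      norm_num [T8, fd1, fd2]
    rw [hval] at hc
    exact notIsInt (-1/2) 2 (-1) (by norm_num) (by decide) hc
  · exfalso
    have hc := h1.1
    have hval : (T9 fd1 - fd1) 0 = -1/6 := by
      norm_num [T9, fd1, fd2]
    rw [hval] at hc
    exact notIsInt (-1/6) 6 (-1) (by norm_num) (by decide) hc
  · exfalso
    have hc := h1.1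
    have hval : (T10 fd1 - fd1) 0 = -1/2 := by
      norm_num [T10, fd1, fd2]
    rw [hval] at hc
    exact notIsInt (-1/2) 2 (-1) (by norm_num) (by decide) hc
  · exfalso
    have hc := h1.1
    have hval : (T11 fd1 - fd1) 0 = -2/3 := by
      norm_num [T11, fd1, fd2]
    rw [hval] at hc
    exact notIsInt (-2/3) 3 (-2) (by norm_num) (by decide) hc

def relZ (a b A B : ZMod 6) : Prop := (2*(A - a) - (B - b) = 0) ∧ (2*(B - b) - (A - a) = 0)

instance : ∀ a b A B, Decidable (relZ a b A B) := fun _ _ _ _ => instDecidableAnd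

lemma zmod_key : ∀ a b c d : ZMod 6,
    a*a - a*b + b*b = 1 → c*c - c*d + d*d = 1 → 2*a*c - a*d - b*c + 2*b*d = -1 →
    (relZ a b 1 0 ∧ relZ c d 0 1) ∨
    (relZ a b 1 1 ∧ relZ c d (-1) 0) ∨
    (relZ a b 0 1 ∧ relZ c d (-1) (-1)) ∨
    (relZ a b (-1) 0 ∧ relZ c d 0 (-1)) ∨
    (relZ a b (-1) (-1) ∧ relZ c d 1 0) ∨
    (relZ a b 0 (-1) ∧ relZ c d 1 1) ∨
    (relZ a b 0 1 ∧ relZ c d 1 0) ∨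
    (relZ a b 1 1 ∧ relZ c d 0 (-1)) ∨
    (relZ a b 1 0 ∧ relZ c d (-1) (-1)) ∨
    (relZ a b 0 (-1) ∧ relZ c d (-1) 0) ∨
    (relZ a b (-1) (-1) ∧ relZ c d 0 1) ∨
    (relZ a b (-1) 0 ∧ relZ c d 1 1) := by decide

lemma OR_inv {g : (Fin 2 → ℚ) ≃ₗ[ℚ] (Fin 2 → ℚ)} (hg : g ∈ OR) : g⁻¹ ∈ OR := by
  refine ⟨fun x y => ?_, fun x => ?_⟩
  · show Bf (g.symm x) (g.symm y) = Bf x y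
    conv_rhs => rw [← LinearEquiv.apply_symm_apply g x, ← LinearEquiv.apply_symm_apply g y,
      hg.1]
  · show x ∈ Rlat ↔ g.symm x ∈ Rlat
    exact Iff.symm ((hg.2 (g.symm x)).trans (by rw [LinearEquiv.apply_symm_apply]))

lemma LE_inv_apply (g : (Fin 2 → ℚ) ≃ₗ[ℚ] (Fin 2 → ℚ)) (x : Fin 2 → ℚ) :
    (g⁻¹) x = g.symm x := rfl

lemma diff_comb (A B s t : ℤ) (w z : Fin 2 → ℚ) :
    (((A:ℚ) • w + (B:ℚ) • z) - ((s:ℚ) • w + (t:ℚ) • z)) =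
      ((A - s : ℤ):ℚ) • w + ((B - t : ℤ):ℚ) • z := by
  funext i
  simp only [Pi.add_apply, Pi.sub_apply, Pi.smul_apply, smul_eq_mul]
  push_cast
  ring

lemma relZ_dvd (a' b' A' B' : ℤ) (h : relZ (a' : ZMod 6) (b' : ZMod 6) (A' : ZMod 6) (B' : ZMod 6)) :
    (6:ℤ) ∣ 2*(A'-a') - (B'-b') ∧ (6:ℤ) ∣ 2*(B'-b') - (A'-a') := by
  obtain ⟨r1, r2⟩ := h
  constructor
  · apply (ZMod.intCast_zmod_eq_zero_iff_dvd _ 6).mp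
    push_cast
    linear_combination r1
  · apply (ZMod.intCast_zmod_eq_zero_iff_dvd _ 6).mp
    push_cast
    linear_combination r2

lemma Rdual_smul_int {x : Fin 2 → ℚ} (hx : x ∈ Rdual) (q : ℚ) (hq : IsInt q) :
    q • x ∈ Rdual := by
  rw [mem_Rdual_iff] at *
  obtain ⟨h1, h2⟩ := hx
  constructor
  · convert hq.mul h1 using 1; simp; ring
  · convert hq.mul h2 using 1; simp; ring


/-- `O(R)` is dihedral of order 12, `R` has exactly 6 vectors of
square norm 4, and the natural map `O(R) → O(q_R)` to the automorphism group of
the discriminant form `q_R : R^∨/R → ℚ/2ℤ` is an isomorphism. The discriminant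
group is presented by an arbitrary surjection `π` with kernel `R`, and
preservation of `q_R` is expressed via `⟨x,x⟩ mod 2ℤ`. -/
theorem OR_dihedral_and_disc :
    (∃ F : DihedralGroup 6 →* ((Fin 2 → ℚ) ≃ₗ[ℚ] (Fin 2 → ℚ)),
        Function.Injective F ∧ Set.range F = OR) ∧
    Nat.card ↥OR = 12 ∧
    Nat.card {x : Fin 2 → ℚ // x ∈ Rlat ∧ Bf x x = 4} = 6 ∧
    (∀ g ∈ OR, ∀ x ∈ Rdual, g x ∈ Rdual) ∧
    (∀ (Q : Type) [AddCommGroup Q] (π : (Fin 2 → ℚ) → Q),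
      (∀ x ∈ Rdual, ∀ y ∈ Rdual, π (x + y) = π x + π y) →
      (∀ q : Q, ∃ x ∈ Rdual, π x = q) →
      (∀ x ∈ Rdual, (π x = 0 ↔ x ∈ Rlat)) →
      ∀ f : Q ≃+ Q,
        (∀ x ∈ Rdual, ∀ y ∈ Rdual,
          f (π x) = π y → IsInt ((Bf y y - Bf x x) / 2)) →
        ∃! g : (Fin 2 → ℚ) ≃ₗ[ℚ] (Fin 2 → ℚ), g ∈ OR ∧
          ∀ x ∈ Rdual, π (g x) = f (π x)) := by
  refine ⟨⟨Fdih, Fdih_inj, Fdih_range⟩, card_OR, card_norm4, OR_preserves_Rdual, ?_⟩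
  intro Q _ π hadd hsurj hker f hq
  have hπ0 : π 0 = 0 := by
    have h := hadd 0 Rdual_zero 0 Rdual_zero
    rw [add_zero] at h
    exact add_eq_right.mp h.symm
  have hπsub : ∀ x ∈ Rdual, ∀ y ∈ Rdual, π (x - y) = π x - π y := by
    intro x hx y hy
    have h := hadd (x - y) (Rdual_sub hx hy) y hy
    rw [sub_add_cancel] at h
    exact eq_sub_of_add_eq h.symm
  have hπeq : ∀ x ∈ Rdual, ∀ y ∈ Rdual, x - y ∈ Rlat → π x = π y := by
    intro x hx y hy h
    have h0 : π (x - y) = 0 := (hker _ (Rdual_sub hx hy)).mpr h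
    rw [hπsub x hx y hy] at h0
    exact sub_eq_zero.mp h0
  have hπneg : ∀ x ∈ Rdual, π (-x) = -π x := by
    intro x hx
    have h := hπsub 0 Rdual_zero x hx
    rw [zero_sub, hπ0, zero_sub] at h
    exact h
  have hnat : ∀ n : ℕ, ∀ x ∈ Rdual, π ((n:ℚ) • x) = n • π x := by
    intro n x hx
    induction n with
    | zero => simpa using hπ0
    | succ m ih =>
      have he : ((m+1 : ℕ):ℚ) • x = (m:ℚ) • x + x := by
        push_cast
        rw [add_smul, one_smul]
      rw [he, hadd _ (Rdual_smul_int hx (m:ℚ) ⟨m, by push_cast; ring⟩) _ hx, ih, succ_nsmul]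
  have hπsmul : ∀ n : ℤ, ∀ x ∈ Rdual, π ((n:ℚ) • x) = n • π x := by
    intro n x hx
    rcases n with m | m
    · have : ((Int.ofNat m : ℤ):ℚ) = ((m:ℕ):ℚ) := by simp
      rw [this, hnat m x hx, Int.ofNat_eq_coe, natCast_zsmul]
    · have h1 : ((Int.negSucc m : ℤ):ℚ) • x = -(((m+1:ℕ):ℚ) • x) := by
        rw [Int.cast_negSucc, neg_smul]
      rw [h1, hπneg _ (Rdual_smul_int hx ((m+1:ℕ):ℚ) ⟨m+1, by push_cast; ring⟩),
        hnat (m+1) x hx, negSucc_zsmul]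
  have hmain : ∀ g : (Fin 2 → ℚ) ≃ₗ[ℚ] (Fin 2 → ℚ), g ∈ OR →
      π (g fd1) = f (π fd1) → π (g fd2) = f (π fd2) →
      ∀ x ∈ Rdual, π (g x) = f (π x) := by
    intro g hg hgf1 hgf2 x hx
    obtain ⟨m, n, hxe⟩ := coords_Rdual hx
    have hd1 := OR_preserves_Rdual g hg fd1 fd1_mem
    have hd2 := OR_preserves_Rdual g hg fd2 fd2_mem
    have hgx : g x = (m:ℚ) • g fd1 + (n:ℚ) • g fd2 := by
      rw [hxe, map_add, map_smul, map_smul]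
    rw [hgx, hadd _ (Rdual_zsmul hd1 m) _ (Rdual_zsmul hd2 n),
      hπsmul m _ hd1, hπsmul n _ hd2, hgf1, hgf2,
      hxe, hadd _ (Rdual_zsmul fd1_mem m) _ (Rdual_zsmul fd2_mem n),
      hπsmul m _ fd1_mem, hπsmul n _ fd2_mem, map_add, map_zsmul, map_zsmul]
  have huniq : ∀ g1 g2 : (Fin 2 → ℚ) ≃ₗ[ℚ] (Fin 2 → ℚ), g1 ∈ OR → g2 ∈ OR →
      (∀ x ∈ Rdual, π (g1 x) = f (π x)) → (∀ x ∈ Rdual, π (g2 x) = f (π x)) → g1 = g2 := by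
    intro g1 g2 hg1 hg2 hp1 hp2
    have hfix : ∀ w, w ∈ Rdual → g1 w - g2 w ∈ Rlat := by
      intro w hw
      have m1 := OR_preserves_Rdual g1 hg1 w hw
      have m2 := OR_preserves_Rdual g2 hg2 w hw
      refine (hker _ (Rdual_sub m1 m2)).mp ?_
      rw [hπsub _ m1 _ m2, hp1 w hw, hp2 w hw, sub_self]
    have hfix2 : ∀ w, w ∈ Rdual → (g2⁻¹ * g1) w - w ∈ Rlat := by
      intro w hw
      have he : (g2⁻¹ * g1) w - w = g2.symm (g1 w - g2 w) := by
        rw [map_sub, LinearEquiv.symm_apply_apply]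
        rfl
      rw [he]
      exact ((OR_inv hg2).2 _).mp (hfix w hw)
    have h1 := OR_id_of_fix (g2⁻¹ * g1) (OR_mul (OR_inv hg2) hg1)
      (hfix2 fd1 fd1_mem) (hfix2 fd2 fd2_mem)
    exact (inv_mul_eq_one.mp h1).symm
  obtain ⟨y1, hy1d, hy1⟩ := hsurj (f (π fd1))
  obtain ⟨y2, hy2d, hy2⟩ := hsurj (f (π fd2))
  obtain ⟨s, t, hy1e⟩ := coords_Rdual hy1d
  obtain ⟨u, v, hy2e⟩ := coords_Rdual hy2d
  obtain ⟨k1, hk1⟩ := hq fd1 fd1_mem y1 hy1d hy1.symm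
  obtain ⟨k2, hk2⟩ := hq fd2 fd2_mem y2 hy2d hy2.symm
  have hy12 : f (π (fd1 + fd2)) = π (y1 + y2) := by
    rw [hadd fd1 fd1_mem fd2 fd2_mem, map_add, ← hy1, ← hy2, ← hadd y1 hy1d y2 hy2d]
  obtain ⟨k3, hk3⟩ := hq (fd1 + fd2) (Rdual_add fd1_mem fd2_mem) (y1 + y2)
    (Rdual_add hy1d hy2d) hy12
  have hB1 : Bf y1 y1 = ((s:ℚ)*s - s*t + t*t)/3 := by
    rw [hy1e]
    simp only [Bf, Pi.add_apply, Pi.smul_apply, smul_eq_mul, fd1, fd2,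
      Matrix.cons_val_zero, Matrix.cons_val_one, Matrix.head_cons]
    ring
  have hB2 : Bf y2 y2 = ((u:ℚ)*u - u*v + v*v)/3 := by
    rw [hy2e]
    simp only [Bf, Pi.add_apply, Pi.smul_apply, smul_eq_mul, fd1, fd2,
      Matrix.cons_val_zero, Matrix.cons_val_one, Matrix.head_cons]
    ring
  have hB3 : Bf (y1 + y2) (y1 + y2) =
      (((s:ℚ)+u)*((s:ℚ)+u) - ((s:ℚ)+u)*((t:ℚ)+v) + ((t:ℚ)+v)*((t:ℚ)+v))/3 := by
    rw [hy1e, hy2e]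
    simp only [Bf, Pi.add_apply, Pi.smul_apply, smul_eq_mul, fd1, fd2,
      Matrix.cons_val_zero, Matrix.cons_val_one, Matrix.head_cons]
    ring
  have hBf1 : Bf fd1 fd1 = 1/3 := by norm_num [Bf, fd1]
  have hBf2 : Bf fd2 fd2 = 1/3 := by norm_num [Bf, fd2]
  have hBf3 : Bf (fd1 + fd2) (fd1 + fd2) = 1/3 := by norm_num [Bf, fd1, fd2]
  rw [hB1, hBf1] at hk1
  rw [hB2, hBf2] at hk2
  rw [hB3, hBf3] at hk3
  have hz1 : s*s - s*t + t*t = 6*k1 + 1 := by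
    have : ((s*s - s*t + t*t : ℤ):ℚ) = ((6*k1 + 1 : ℤ):ℚ) := by
      push_cast
      field_simp at hk1
      linarith
    exact_mod_cast this
  have hz2 : u*u - u*v + v*v = 6*k2 + 1 := by
    have : ((u*u - u*v + v*v : ℤ):ℚ) = ((6*k2 + 1 : ℤ):ℚ) := by
      push_cast
      field_simp at hk2
      linarith
    exact_mod_cast this
  have hz3 : 2*s*u - s*v - t*u + 2*t*v = 6*(k3 - k1 - k2) - 1 := by
    have : ((2*s*u - s*v - t*u + 2*t*v : ℤ):ℚ) = ((6*(k3 - k1 - k2) - 1 : ℤ):ℚ) := by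
      push_cast
      field_simp at hk1 hk2 hk3
      linarith
    exact_mod_cast this
  have hm1 : (s:ZMod 6)*(s:ZMod 6) - (s:ZMod 6)*(t:ZMod 6) + (t:ZMod 6)*(t:ZMod 6) = 1 := by
    have := congrArg (Int.cast : ℤ → ZMod 6) hz1
    push_cast at this
    rw [this, show ((6:ZMod 6)) = 0 by decide]
    ring
  have hm2 : (u:ZMod 6)*(u:ZMod 6) - (u:ZMod 6)*(v:ZMod 6) + (v:ZMod 6)*(v:ZMod 6) = 1 := by
    have := congrArg (Int.cast : ℤ → ZMod 6) hz2
    push_cast at this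
    rw [this, show ((6:ZMod 6)) = 0 by decide]
    ring
  have hm3 : 2*(s:ZMod 6)*(u:ZMod 6) - (s:ZMod 6)*(v:ZMod 6) - (t:ZMod 6)*(u:ZMod 6)
      + 2*(t:ZMod 6)*(v:ZMod 6) = -1 := by
    have := congrArg (Int.cast : ℤ → ZMod 6) hz3
    push_cast at this
    rw [this, show ((6:ZMod 6)) = 0 by decide]
    ring
  rcases zmod_key (s:ZMod 6) (t:ZMod 6) (u:ZMod 6) (v:ZMod 6) hm1 hm2 hm3 with
    h|h|h|h|h|h|h|h|h|h|h|h
  · obtain ⟨r1, r2⟩ := h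
    obtain ⟨r11, r12⟩ := r1
    obtain ⟨r21, r22⟩ := r2
    have d1 : (6:ℤ) ∣ 2*((1) - s) - ((0) - t) := by
      apply (ZMod.intCast_zmod_eq_zero_iff_dvd _ 6).mp
      push_cast
      linear_combination r11
    have d2 : (6:ℤ) ∣ 2*((0) - t) - ((1) - s) := by
      apply (ZMod.intCast_zmod_eq_zero_iff_dvd _ 6).mp
      push_cast
      linear_combination r12
    have d3 : (6:ℤ) ∣ 2*((0) - u) - ((1) - v) := by
      apply (ZMod.intCast_zmod_eq_zero_iff_dvd _ 6).mp
      push_cast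
      linear_combination r21
    have d4 : (6:ℤ) ∣ 2*((1) - v) - ((0) - u) := by
      apply (ZMod.intCast_zmod_eq_zero_iff_dvd _ 6).mp
      push_cast
      linear_combination r22
    have p1 : π (T0 fd1) = f (π fd1) := by
      rw [← hy1]
      refine hπeq _ (OR_preserves_Rdual _ T0_mem fd1 fd1_mem) _ hy1d ?_
      rw [T0_fd1, hy1e, diff_comb]
      exact comb_mem_Rlat _ _ d1 d2
    have p2 : π (T0 fd2) = f (π fd2) := by
      rw [← hy2]
      refine hπeq _ (OR_preserves_Rdual _ T0_mem fd2 fd2_mem) _ hy2d ?_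
      rw [T0_fd2, hy2e, diff_comb]
      exact comb_mem_Rlat _ _ d3 d4
    have hprop := hmain T0 T0_mem p1 p2
    exact ⟨T0, ⟨T0_mem, hprop⟩, fun g' hg' => huniq g' T0 hg'.1 T0_mem hg'.2 hprop⟩
  · obtain ⟨r1, r2⟩ := h
    obtain ⟨r11, r12⟩ := r1
    obtain ⟨r21, r22⟩ := r2
    have d1 : (6:ℤ) ∣ 2*((1) - s) - ((1) - t) := by
      apply (ZMod.intCast_zmod_eq_zero_iff_dvd _ 6).mp
      push_cast
      linear_combination r11
    have d2 : (6:ℤ) ∣ 2*((1) - t) - ((1) - s) := by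
      apply (ZMod.intCast_zmod_eq_zero_iff_dvd _ 6).mp
      push_cast
      linear_combination r12
    have d3 : (6:ℤ) ∣ 2*((-1) - u) - ((0) - v) := by
      apply (ZMod.intCast_zmod_eq_zero_iff_dvd _ 6).mp
      push_cast
      linear_combination r21
    have d4 : (6:ℤ) ∣ 2*((0) - v) - ((-1) - u) := by
      apply (ZMod.intCast_zmod_eq_zero_iff_dvd _ 6).mp
      push_cast
      linear_combination r22
    have p1 : π (T1 fd1) = f (π fd1) := by
      rw [← hy1]
      refine hπeq _ (OR_preserves_Rdual _ T1_mem fd1 fd1_mem) _ hy1d ?_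
      rw [T1_fd1, hy1e, diff_comb]
      exact comb_mem_Rlat _ _ d1 d2
    have p2 : π (T1 fd2) = f (π fd2) := by
      rw [← hy2]
      refine hπeq _ (OR_preserves_Rdual _ T1_mem fd2 fd2_mem) _ hy2d ?_
      rw [T1_fd2, hy2e, diff_comb]
      exact comb_mem_Rlat _ _ d3 d4
    have hprop := hmain T1 T1_mem p1 p2
    exact ⟨T1, ⟨T1_mem, hprop⟩, fun g' hg' => huniq g' T1 hg'.1 T1_mem hg'.2 hprop⟩
  · obtain ⟨r1, r2⟩ := h
    obtain ⟨r11, r12⟩ := r1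
    obtain ⟨r21, r22⟩ := r2
    have d1 : (6:ℤ) ∣ 2*((0) - s) - ((1) - t) := by
      apply (ZMod.intCast_zmod_eq_zero_iff_dvd _ 6).mp
      push_cast
      linear_combination r11
    have d2 : (6:ℤ) ∣ 2*((1) - t) - ((0) - s) := by
      apply (ZMod.intCast_zmod_eq_zero_iff_dvd _ 6).mp
      push_cast
      linear_combination r12
    have d3 : (6:ℤ) ∣ 2*((-1) - u) - ((-1) - v) := by
      apply (ZMod.intCast_zmod_eq_zero_iff_dvd _ 6).mp
      push_cast
      linear_combination r21
    have d4 : (6:ℤ) ∣ 2*((-1) - v) - ((-1) - u) := by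
      apply (ZMod.intCast_zmod_eq_zero_iff_dvd _ 6).mp
      push_cast
      linear_combination r22
    have p1 : π (T2 fd1) = f (π fd1) := by
      rw [← hy1]
      refine hπeq _ (OR_preserves_Rdual _ T2_mem fd1 fd1_mem) _ hy1d ?_
      rw [T2_fd1, hy1e, diff_comb]
      exact comb_mem_Rlat _ _ d1 d2
    have p2 : π (T2 fd2) = f (π fd2) := by
      rw [← hy2]
      refine hπeq _ (OR_preserves_Rdual _ T2_mem fd2 fd2_mem) _ hy2d ?_
      rw [T2_fd2, hy2e, diff_comb]
      exact comb_mem_Rlat _ _ d3 d4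
    have hprop := hmain T2 T2_mem p1 p2
    exact ⟨T2, ⟨T2_mem, hprop⟩, fun g' hg' => huniq g' T2 hg'.1 T2_mem hg'.2 hprop⟩
  · obtain ⟨r1, r2⟩ := h
    obtain ⟨r11, r12⟩ := r1
    obtain ⟨r21, r22⟩ := r2
    have d1 : (6:ℤ) ∣ 2*((-1) - s) - ((0) - t) := by
      apply (ZMod.intCast_zmod_eq_zero_iff_dvd _ 6).mp
      push_cast
      linear_combination r11
    have d2 : (6:ℤ) ∣ 2*((0) - t) - ((-1) - s) := by
      apply (ZMod.intCast_zmod_eq_zero_iff_dvd _ 6).mp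
      push_cast
      linear_combination r12
    have d3 : (6:ℤ) ∣ 2*((0) - u) - ((-1) - v) := by
      apply (ZMod.intCast_zmod_eq_zero_iff_dvd _ 6).mp
      push_cast
      linear_combination r21
    have d4 : (6:ℤ) ∣ 2*((-1) - v) - ((0) - u) := by
      apply (ZMod.intCast_zmod_eq_zero_iff_dvd _ 6).mp
      push_cast
      linear_combination r22
    have p1 : π (T3 fd1) = f (π fd1) := by
      rw [← hy1]
      refine hπeq _ (OR_preserves_Rdual _ T3_mem fd1 fd1_mem) _ hy1d ?_
      rw [T3_fd1, hy1e, diff_comb]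
      exact comb_mem_Rlat _ _ d1 d2
    have p2 : π (T3 fd2) = f (π fd2) := by
      rw [← hy2]
      refine hπeq _ (OR_preserves_Rdual _ T3_mem fd2 fd2_mem) _ hy2d ?_
      rw [T3_fd2, hy2e, diff_comb]
      exact comb_mem_Rlat _ _ d3 d4
    have hprop := hmain T3 T3_mem p1 p2
    exact ⟨T3, ⟨T3_mem, hprop⟩, fun g' hg' => huniq g' T3 hg'.1 T3_mem hg'.2 hprop⟩
  · obtain ⟨r1, r2⟩ := h
    obtain ⟨r11, r12⟩ := r1
    obtain ⟨r21, r22⟩ := r2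
    have d1 : (6:ℤ) ∣ 2*((-1) - s) - ((-1) - t) := by
      apply (ZMod.intCast_zmod_eq_zero_iff_dvd _ 6).mp
      push_cast
      linear_combination r11
    have d2 : (6:ℤ) ∣ 2*((-1) - t) - ((-1) - s) := by
      apply (ZMod.intCast_zmod_eq_zero_iff_dvd _ 6).mp
      push_cast
      linear_combination r12
    have d3 : (6:ℤ) ∣ 2*((1) - u) - ((0) - v) := by
      apply (ZMod.intCast_zmod_eq_zero_iff_dvd _ 6).mp
      push_cast
      linear_combination r21
    have d4 : (6:ℤ) ∣ 2*((0) - v) - ((1) - u) := by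
      apply (ZMod.intCast_zmod_eq_zero_iff_dvd _ 6).mp
      push_cast
      linear_combination r22
    have p1 : π (T4 fd1) = f (π fd1) := by
      rw [← hy1]
      refine hπeq _ (OR_preserves_Rdual _ T4_mem fd1 fd1_mem) _ hy1d ?_
      rw [T4_fd1, hy1e, diff_comb]
      exact comb_mem_Rlat _ _ d1 d2
    have p2 : π (T4 fd2) = f (π fd2) := by
      rw [← hy2]
      refine hπeq _ (OR_preserves_Rdual _ T4_mem fd2 fd2_mem) _ hy2d ?_
      rw [T4_fd2, hy2e, diff_comb]
      exact comb_mem_Rlat _ _ d3 d4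
    have hprop := hmain T4 T4_mem p1 p2
    exact ⟨T4, ⟨T4_mem, hprop⟩, fun g' hg' => huniq g' T4 hg'.1 T4_mem hg'.2 hprop⟩
  · obtain ⟨r1, r2⟩ := h
    obtain ⟨r11, r12⟩ := r1
    obtain ⟨r21, r22⟩ := r2
    have d1 : (6:ℤ) ∣ 2*((0) - s) - ((-1) - t) := by
      apply (ZMod.intCast_zmod_eq_zero_iff_dvd _ 6).mp
      push_cast
      linear_combination r11
    have d2 : (6:ℤ) ∣ 2*((-1) - t) - ((0) - s) := by
      apply (ZMod.intCast_zmod_eq_zero_iff_dvd _ 6).mp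
      push_cast
      linear_combination r12
    have d3 : (6:ℤ) ∣ 2*((1) - u) - ((1) - v) := by
      apply (ZMod.intCast_zmod_eq_zero_iff_dvd _ 6).mp
      push_cast
      linear_combination r21
    have d4 : (6:ℤ) ∣ 2*((1) - v) - ((1) - u) := by
      apply (ZMod.intCast_zmod_eq_zero_iff_dvd _ 6).mp
      push_cast
      linear_combination r22
    have p1 : π (T5 fd1) = f (π fd1) := by
      rw [← hy1]
      refine hπeq _ (OR_preserves_Rdual _ T5_mem fd1 fd1_mem) _ hy1d ?_
      rw [T5_fd1, hy1e, diff_comb]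
      exact comb_mem_Rlat _ _ d1 d2
    have p2 : π (T5 fd2) = f (π fd2) := by
      rw [← hy2]
      refine hπeq _ (OR_preserves_Rdual _ T5_mem fd2 fd2_mem) _ hy2d ?_
      rw [T5_fd2, hy2e, diff_comb]
      exact comb_mem_Rlat _ _ d3 d4
    have hprop := hmain T5 T5_mem p1 p2
    exact ⟨T5, ⟨T5_mem, hprop⟩, fun g' hg' => huniq g' T5 hg'.1 T5_mem hg'.2 hprop⟩
  · obtain ⟨r1, r2⟩ := h
    obtain ⟨r11, r12⟩ := r1
    obtain ⟨r21, r22⟩ := r2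
    have d1 : (6:ℤ) ∣ 2*((0) - s) - ((1) - t) := by
      apply (ZMod.intCast_zmod_eq_zero_iff_dvd _ 6).mp
      push_cast
      linear_combination r11
    have d2 : (6:ℤ) ∣ 2*((1) - t) - ((0) - s) := by
      apply (ZMod.intCast_zmod_eq_zero_iff_dvd _ 6).mp
      push_cast
      linear_combination r12
    have d3 : (6:ℤ) ∣ 2*((1) - u) - ((0) - v) := by
      apply (ZMod.intCast_zmod_eq_zero_iff_dvd _ 6).mp
      push_cast
      linear_combination r21
    have d4 : (6:ℤ) ∣ 2*((0) - v) - ((1) - u) := by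
      apply (ZMod.intCast_zmod_eq_zero_iff_dvd _ 6).mp
      push_cast
      linear_combination r22
    have p1 : π (T6 fd1) = f (π fd1) := by
      rw [← hy1]
      refine hπeq _ (OR_preserves_Rdual _ T6_mem fd1 fd1_mem) _ hy1d ?_
      rw [T6_fd1, hy1e, diff_comb]
      exact comb_mem_Rlat _ _ d1 d2
    have p2 : π (T6 fd2) = f (π fd2) := by
      rw [← hy2]
      refine hπeq _ (OR_preserves_Rdual _ T6_mem fd2 fd2_mem) _ hy2d ?_
      rw [T6_fd2, hy2e, diff_comb]
      exact comb_mem_Rlat _ _ d3 d4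
    have hprop := hmain T6 T6_mem p1 p2
    exact ⟨T6, ⟨T6_mem, hprop⟩, fun g' hg' => huniq g' T6 hg'.1 T6_mem hg'.2 hprop⟩
  · obtain ⟨r1, r2⟩ := h
    obtain ⟨r11, r12⟩ := r1
    obtain ⟨r21, r22⟩ := r2
    have d1 : (6:ℤ) ∣ 2*((1) - s) - ((1) - t) := by
      apply (ZMod.intCast_zmod_eq_zero_iff_dvd _ 6).mp
      push_cast
      linear_combination r11
    have d2 : (6:ℤ) ∣ 2*((1) - t) - ((1) - s) := by
      apply (ZMod.intCast_zmod_eq_zero_iff_dvd _ 6).mp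
      push_cast
      linear_combination r12
    have d3 : (6:ℤ) ∣ 2*((0) - u) - ((-1) - v) := by
      apply (ZMod.intCast_zmod_eq_zero_iff_dvd _ 6).mp
      push_cast
      linear_combination r21
    have d4 : (6:ℤ) ∣ 2*((-1) - v) - ((0) - u) := by
      apply (ZMod.intCast_zmod_eq_zero_iff_dvd _ 6).mp
      push_cast
      linear_combination r22
    have p1 : π (T7 fd1) = f (π fd1) := by
      rw [← hy1]
      refine hπeq _ (OR_preserves_Rdual _ T7_mem fd1 fd1_mem) _ hy1d ?_
      rw [T7_fd1, hy1e, diff_comb]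
      exact comb_mem_Rlat _ _ d1 d2
    have p2 : π (T7 fd2) = f (π fd2) := by
      rw [← hy2]
      refine hπeq _ (OR_preserves_Rdual _ T7_mem fd2 fd2_mem) _ hy2d ?_
      rw [T7_fd2, hy2e, diff_comb]
      exact comb_mem_Rlat _ _ d3 d4
    have hprop := hmain T7 T7_mem p1 p2
    exact ⟨T7, ⟨T7_mem, hprop⟩, fun g' hg' => huniq g' T7 hg'.1 T7_mem hg'.2 hprop⟩
  · obtain ⟨r1, r2⟩ := h
    obtain ⟨r11, r12⟩ := r1
    obtain ⟨r21, r22⟩ := r2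
    have d1 : (6:ℤ) ∣ 2*((1) - s) - ((0) - t) := by
      apply (ZMod.intCast_zmod_eq_zero_iff_dvd _ 6).mp
      push_cast
      linear_combination r11
    have d2 : (6:ℤ) ∣ 2*((0) - t) - ((1) - s) := by
      apply (ZMod.intCast_zmod_eq_zero_iff_dvd _ 6).mp
      push_cast
      linear_combination r12
    have d3 : (6:ℤ) ∣ 2*((-1) - u) - ((-1) - v) := by
      apply (ZMod.intCast_zmod_eq_zero_iff_dvd _ 6).mp
      push_cast
      linear_combination r21
    have d4 : (6:ℤ) ∣ 2*((-1) - v) - ((-1) - u) := by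
      apply (ZMod.intCast_zmod_eq_zero_iff_dvd _ 6).mp
      push_cast
      linear_combination r22
    have p1 : π (T8 fd1) = f (π fd1) := by
      rw [← hy1]
      refine hπeq _ (OR_preserves_Rdual _ T8_mem fd1 fd1_mem) _ hy1d ?_
      rw [T8_fd1, hy1e, diff_comb]
      exact comb_mem_Rlat _ _ d1 d2
    have p2 : π (T8 fd2) = f (π fd2) := by
      rw [← hy2]
      refine hπeq _ (OR_preserves_Rdual _ T8_mem fd2 fd2_mem) _ hy2d ?_
      rw [T8_fd2, hy2e, diff_comb]
      exact comb_mem_Rlat _ _ d3 d4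
    have hprop := hmain T8 T8_mem p1 p2
    exact ⟨T8, ⟨T8_mem, hprop⟩, fun g' hg' => huniq g' T8 hg'.1 T8_mem hg'.2 hprop⟩
  · obtain ⟨r1, r2⟩ := h
    obtain ⟨r11, r12⟩ := r1
    obtain ⟨r21, r22⟩ := r2
    have d1 : (6:ℤ) ∣ 2*((0) - s) - ((-1) - t) := by
      apply (ZMod.intCast_zmod_eq_zero_iff_dvd _ 6).mp
      push_cast
      linear_combination r11
    have d2 : (6:ℤ) ∣ 2*((-1) - t) - ((0) - s) := by
      apply (ZMod.intCast_zmod_eq_zero_iff_dvd _ 6).mp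
      push_cast
      linear_combination r12
    have d3 : (6:ℤ) ∣ 2*((-1) - u) - ((0) - v) := by
      apply (ZMod.intCast_zmod_eq_zero_iff_dvd _ 6).mp
      push_cast
      linear_combination r21
    have d4 : (6:ℤ) ∣ 2*((0) - v) - ((-1) - u) := by
      apply (ZMod.intCast_zmod_eq_zero_iff_dvd _ 6).mp
      push_cast
      linear_combination r22
    have p1 : π (T9 fd1) = f (π fd1) := by
      rw [← hy1]
      refine hπeq _ (OR_preserves_Rdual _ T9_mem fd1 fd1_mem) _ hy1d ?_
      rw [T9_fd1, hy1e, diff_comb]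
      exact comb_mem_Rlat _ _ d1 d2
    have p2 : π (T9 fd2) = f (π fd2) := by
      rw [← hy2]
      refine hπeq _ (OR_preserves_Rdual _ T9_mem fd2 fd2_mem) _ hy2d ?_
      rw [T9_fd2, hy2e, diff_comb]
      exact comb_mem_Rlat _ _ d3 d4
    have hprop := hmain T9 T9_mem p1 p2
    exact ⟨T9, ⟨T9_mem, hprop⟩, fun g' hg' => huniq g' T9 hg'.1 T9_mem hg'.2 hprop⟩
  · obtain ⟨r1, r2⟩ := h
    obtain ⟨r11, r12⟩ := r1
    obtain ⟨r21, r22⟩ := r2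
    have d1 : (6:ℤ) ∣ 2*((-1) - s) - ((-1) - t) := by
      apply (ZMod.intCast_zmod_eq_zero_iff_dvd _ 6).mp
      push_cast
      linear_combination r11
    have d2 : (6:ℤ) ∣ 2*((-1) - t) - ((-1) - s) := by
      apply (ZMod.intCast_zmod_eq_zero_iff_dvd _ 6).mp
      push_cast
      linear_combination r12
    have d3 : (6:ℤ) ∣ 2*((0) - u) - ((1) - v) := by
      apply (ZMod.intCast_zmod_eq_zero_iff_dvd _ 6).mp
      push_cast
      linear_combination r21
    have d4 : (6:ℤ) ∣ 2*((1) - v) - ((0) - u) := by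
      apply (ZMod.intCast_zmod_eq_zero_iff_dvd _ 6).mp
      push_cast
      linear_combination r22
    have p1 : π (T10 fd1) = f (π fd1) := by
      rw [← hy1]
      refine hπeq _ (OR_preserves_Rdual _ T10_mem fd1 fd1_mem) _ hy1d ?_
      rw [T10_fd1, hy1e, diff_comb]
      exact comb_mem_Rlat _ _ d1 d2
    have p2 : π (T10 fd2) = f (π fd2) := by
      rw [← hy2]
      refine hπeq _ (OR_preserves_Rdual _ T10_mem fd2 fd2_mem) _ hy2d ?_
      rw [T10_fd2, hy2e, diff_comb]
      exact comb_mem_Rlat _ _ d3 d4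
    have hprop := hmain T10 T10_mem p1 p2
    exact ⟨T10, ⟨T10_mem, hprop⟩, fun g' hg' => huniq g' T10 hg'.1 T10_mem hg'.2 hprop⟩
  · obtain ⟨r1, r2⟩ := h
    obtain ⟨r11, r12⟩ := r1
    obtain ⟨r21, r22⟩ := r2
    have d1 : (6:ℤ) ∣ 2*((-1) - s) - ((0) - t) := by
      apply (ZMod.intCast_zmod_eq_zero_iff_dvd _ 6).mp
      push_cast
      linear_combination r11
    have d2 : (6:ℤ) ∣ 2*((0) - t) - ((-1) - s) := by
      apply (ZMod.intCast_zmod_eq_zero_iff_dvd _ 6).mp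
      push_cast
      linear_combination r12
    have d3 : (6:ℤ) ∣ 2*((1) - u) - ((1) - v) := by
      apply (ZMod.intCast_zmod_eq_zero_iff_dvd _ 6).mp
      push_cast
      linear_combination r21
    have d4 : (6:ℤ) ∣ 2*((1) - v) - ((1) - u) := by
      apply (ZMod.intCast_zmod_eq_zero_iff_dvd _ 6).mp
      push_cast
      linear_combination r22
    have p1 : π (T11 fd1) = f (π fd1) := by
      rw [← hy1]
      refine hπeq _ (OR_preserves_Rdual _ T11_mem fd1 fd1_mem) _ hy1d ?_
      rw [T11_fd1, hy1e, diff_comb]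
      exact comb_mem_Rlat _ _ d1 d2
    have p2 : π (T11 fd2) = f (π fd2) := by
      rw [← hy2]
      refine hπeq _ (OR_preserves_Rdual _ T11_mem fd2 fd2_mem) _ hy2d ?_
      rw [T11_fd2, hy2e, diff_comb]
      exact comb_mem_Rlat _ _ d3 d4
    have hprop := hmain T11 T11_mem p1 p2
    exact ⟨T11, ⟨T11_mem, hprop⟩, fun g' hg' => huniq g' T11 hg'.1 T11_mem hg'.2 hprop⟩
end

section
/- The natural homomorphism τ from Aut(T_{AB}, ν_T) to O(R_{AB}^⊥) — sending a ν_T-preserving permutation of T_{AB} to the induced isometry of the lattice generated by the differences T − T′ — is injective, and its image does not contain −Id. -/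
open scoped BigOperators

/-- A permutation of `T_AB` preserving `ν_T(T,T′) = ⟨T,T′⟩ − 1`
(equivalently preserving the inner product). -/
def PreservesNu (σ : Equiv.Perm ↥TAB) : Prop :=
  ∀ T T' : ↥TAB,
    leechInner ((σ T) : Fin 24 → ℤ) ((σ T') : Fin 24 → ℤ) - 1
      = leechInner (T : Fin 24 → ℤ) ((T') : Fin 24 → ℤ) - 1

lemma sum24 (g : Fin 24 → ℚ) : (∑ i, g i) =
    g 0 + g 1 + g 2 + g 3 + g 4 + g 5 + g 6 + g 7 + g 8 + g 9 + g 10 + g 11 + g 12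
    + g 13 + g 14 + g 15 + g 16 + g 17 + g 18 + g 19 + g 20 + g 21 + g 22 + g 23 := by
  simp [Fin.sum_univ_succ]
  ring

lemma li_expand (x y : Fin 24 → ℤ) : leechInner x y =
    ((x 0:ℚ)*y 0 + (x 1:ℚ)*y 1 + (x 2:ℚ)*y 2 + (x 3:ℚ)*y 3 + (x 4:ℚ)*y 4 + (x 5:ℚ)*y 5
    + (x 6:ℚ)*y 6 + (x 7:ℚ)*y 7 + (x 8:ℚ)*y 8 + (x 9:ℚ)*y 9 + (x 10:ℚ)*y 10 + (x 11:ℚ)*y 11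
    + (x 12:ℚ)*y 12 + (x 13:ℚ)*y 13 + (x 14:ℚ)*y 14 + (x 15:ℚ)*y 15 + (x 16:ℚ)*y 16
    + (x 17:ℚ)*y 17 + (x 18:ℚ)*y 18 + (x 19:ℚ)*y 19 + (x 20:ℚ)*y 20 + (x 21:ℚ)*y 21
    + (x 22:ℚ)*y 22 + (x 23:ℚ)*y 23)/8 := by
  rw [leechInner, sum24 (fun i => (x i : ℚ) * (y i : ℚ))]

lemma fv0 : ((0:Fin 24):ℕ) = 0 := rfl
lemma fv1 : ((1:Fin 24):ℕ) = 1 := rfl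
lemma fv2 : ((2:Fin 24):ℕ) = 2 := rfl
lemma fv3 : ((3:Fin 24):ℕ) = 3 := rfl
lemma fv4 : ((4:Fin 24):ℕ) = 4 := rfl
lemma fv5 : ((5:Fin 24):ℕ) = 5 := rfl
lemma fv6 : ((6:Fin 24):ℕ) = 6 := rfl
lemma fv7 : ((7:Fin 24):ℕ) = 7 := rfl
lemma fv8 : ((8:Fin 24):ℕ) = 8 := rfl
lemma fv9 : ((9:Fin 24):ℕ) = 9 := rfl
lemma fv10 : ((10:Fin 24):ℕ) = 10 := rfl
lemma fv11 : ((11:Fin 24):ℕ) = 11 := rfl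
lemma fv12 : ((12:Fin 24):ℕ) = 12 := rfl
lemma fv13 : ((13:Fin 24):ℕ) = 13 := rfl
lemma fv14 : ((14:Fin 24):ℕ) = 14 := rfl
lemma fv15 : ((15:Fin 24):ℕ) = 15 := rfl
lemma fv16 : ((16:Fin 24):ℕ) = 16 := rfl
lemma fv17 : ((17:Fin 24):ℕ) = 17 := rfl
lemma fv18 : ((18:Fin 24):ℕ) = 18 := rfl
lemma fv19 : ((19:Fin 24):ℕ) = 19 := rfl
lemma fv20 : ((20:Fin 24):ℕ) = 20 := rfl
lemma fv21 : ((21:Fin 24):ℕ) = 21 := rfl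
lemma fv22 : ((22:Fin 24):ℕ) = 22 := rfl
lemma fv23 : ((23:Fin 24):ℕ) = 23 := rfl

def tC : Fin 24 → ℤ := fun i => if i.val = 21 then 4 else if i.val = 22 then 4 else 0
def tP : Fin 24 → ℤ := fun i => if i.val = 0 then 4 else if i.val = 23 then -4 else 0
def tM : Fin 24 → ℤ := fun i => if i.val = 0 then -4 else if i.val = 23 then -4 else 0

lemma mem_norm {x : Fin 24 → ℤ} (hx : x ∈ TAB) : leechInner x x = 4 := by
  obtain ⟨-, h, -, -⟩ := hx; exact h
lemma mem_normA {x : Fin 24 → ℤ} (hx : x ∈ TAB) :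
    leechInner (x - vA) (x - vA) = 4 := by
  obtain ⟨-, -, h, -⟩ := hx; exact h
lemma mem_normB {x : Fin 24 → ℤ} (hx : x ∈ TAB) :
    leechInner (x - vB) (x - vB) = 4 := by
  obtain ⟨-, -, -, h⟩ := hx; exact h

lemma mem_tC : tC ∈ TAB := by
  refine ⟨⟨0, Or.inl rfl, by decide, ?_, by decide⟩, ?_, ?_, ?_⟩
  · have h : (fun i => if (4:ℤ) ∣ (tC i - 0 - 2) then (1:ZMod 2) else 0) = 0 := by decide
    rw [h]; exact Submodule.zero_mem _
  · rw [li_expand]; norm_num [tC, fv0, fv1, fv2, fv3, fv4, fv5, fv6, fv7, fv8, fv9, fv10, fv11, fv12, fv13, fv14, fv15, fv16, fv17, fv18, fv19, fv20, fv21, fv22, fv23]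
  · rw [li_expand]; norm_num [tC, vA, fv0, fv1, fv2, fv3, fv4, fv5, fv6, fv7, fv8, fv9, fv10, fv11, fv12, fv13, fv14, fv15, fv16, fv17, fv18, fv19, fv20, fv21, fv22, fv23]
  · rw [li_expand]; norm_num [tC, vB, fv0, fv1, fv2, fv3, fv4, fv5, fv6, fv7, fv8, fv9, fv10, fv11, fv12, fv13, fv14, fv15, fv16, fv17, fv18, fv19, fv20, fv21, fv22, fv23]

lemma mem_tP : tP ∈ TAB := by
  refine ⟨⟨0, Or.inl rfl, by decide, ?_, by decide⟩, ?_, ?_, ?_⟩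
  · have h : (fun i => if (4:ℤ) ∣ (tP i - 0 - 2) then (1:ZMod 2) else 0) = 0 := by decide
    rw [h]; exact Submodule.zero_mem _
  · rw [li_expand]; norm_num [tP, fv0, fv1, fv2, fv3, fv4, fv5, fv6, fv7, fv8, fv9, fv10, fv11, fv12, fv13, fv14, fv15, fv16, fv17, fv18, fv19, fv20, fv21, fv22, fv23]
  · rw [li_expand]; norm_num [tP, vA, fv0, fv1, fv2, fv3, fv4, fv5, fv6, fv7, fv8, fv9, fv10, fv11, fv12, fv13, fv14, fv15, fv16, fv17, fv18, fv19, fv20, fv21, fv22, fv23]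
  · rw [li_expand]; norm_num [tP, vB, fv0, fv1, fv2, fv3, fv4, fv5, fv6, fv7, fv8, fv9, fv10, fv11, fv12, fv13, fv14, fv15, fv16, fv17, fv18, fv19, fv20, fv21, fv22, fv23]

lemma mem_tM : tM ∈ TAB := by
  refine ⟨⟨0, Or.inl rfl, by decide, ?_, by decide⟩, ?_, ?_, ?_⟩
  · have h : (fun i => if (4:ℤ) ∣ (tM i - 0 - 2) then (1:ZMod 2) else 0) = 0 := by decide
    rw [h]; exact Submodule.zero_mem _
  · rw [li_expand]; norm_num [tM, fv0, fv1, fv2, fv3, fv4, fv5, fv6, fv7, fv8, fv9, fv10, fv11, fv12, fv13, fv14, fv15, fv16, fv17, fv18, fv19, fv20, fv21, fv22, fv23]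
  · rw [li_expand]; norm_num [tM, vA, fv0, fv1, fv2, fv3, fv4, fv5, fv6, fv7, fv8, fv9, fv10, fv11, fv12, fv13, fv14, fv15, fv16, fv17, fv18, fv19, fv20, fv21, fv22, fv23]
  · rw [li_expand]; norm_num [tM, vB, fv0, fv1, fv2, fv3, fv4, fv5, fv6, fv7, fv8, fv9, fv10, fv11, fv12, fv13, fv14, fv15, fv16, fv17, fv18, fv19, fv20, fv21, fv22, fv23]

set_option maxHeartbeats 2000000 in
/-- the natural homomorphism `τ : Aut(T_AB, ν_T) → O(R_AB^⊥)`
(sending `σ` to the isometry acting by `T′ − T ↦ σ(T′) − σ(T)` on the lattice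
generated by the differences) is injective, and `−Id` is not in its image. -/
theorem tau_injective_and_no_neg_id :
    (∀ σ : Equiv.Perm ↥TAB, PreservesNu σ →
      (∀ T T' : ↥TAB,
        ((σ T') : Fin 24 → ℤ) - ((σ T) : Fin 24 → ℤ)
          = ((T') : Fin 24 → ℤ) - (T : Fin 24 → ℤ)) →
      σ = Equiv.refl ↥TAB) ∧
    ¬ ∃ σ : Equiv.Perm ↥TAB, PreservesNu σ ∧
        ∀ T T' : ↥TAB,
          ((σ T') : Fin 24 → ℤ) - ((σ T) : Fin 24 → ℤ)
            = -(((T') : Fin 24 → ℤ) - (T : Fin 24 → ℤ)) := by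
  constructor
  · intro σ hν hall
    apply Equiv.ext
    intro T
    show σ T = T
    have h1 := hall T (σ T)
    have hVi : ∀ i : Fin 24, ((σ (σ T) : ↥TAB) : Fin 24 → ℤ) i
        = 2 * ((σ T : ↥TAB) : Fin 24 → ℤ) i - (T : Fin 24 → ℤ) i := by
      intro i
      have h2 := congrFun h1 i
      simp only [Pi.sub_apply] at h2
      omega
    have hT : leechInner (T : Fin 24 → ℤ) (T : Fin 24 → ℤ) = 4 := mem_norm T.2
    have hU : leechInner ((σ T : ↥TAB) : Fin 24 → ℤ) ((σ T : ↥TAB) : Fin 24 → ℤ) = 4 :=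
      mem_norm (σ T).2
    have hV : leechInner ((σ (σ T) : ↥TAB) : Fin 24 → ℤ)
        ((σ (σ T) : ↥TAB) : Fin 24 → ℤ) = 4 := mem_norm (σ (σ T)).2
    rw [li_expand] at hT hU hV
    simp only [hVi] at hV
    push_cast at hT hU hV
    have hz : ∑ i : Fin 24,
        ((((σ T : ↥TAB) : Fin 24 → ℤ) i : ℚ) - ((T : Fin 24 → ℤ) i : ℚ))^2 = 0 := by
      rw [sum24 (fun i => ((((σ T : ↥TAB) : Fin 24 → ℤ) i : ℚ) - ((T : Fin 24 → ℤ) i : ℚ))^2)]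
      linear_combination (-8 : ℚ)*hU + 4*hT + 4*hV
    have hco : ∀ i : Fin 24,
        ((((σ T : ↥TAB) : Fin 24 → ℤ) i : ℚ) - ((T : Fin 24 → ℤ) i : ℚ))^2 = 0 := by
      intro i
      exact (Finset.sum_eq_zero_iff_of_nonneg (fun j _ => sq_nonneg _)).mp hz i
        (Finset.mem_univ i)
    refine Subtype.ext (funext fun i => ?_)
    have h3 := pow_eq_zero_iff (two_ne_zero) |>.mp (hco i)
    have h4 : ((((σ T : ↥TAB) : Fin 24 → ℤ) i : ℚ)) = ((T : Fin 24 → ℤ) i : ℚ) := by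
      linarith [h3]
    exact_mod_cast h4
  · rintro ⟨σ, hν, hall⟩
    have rcC : (((⟨tC, mem_tC⟩ : ↥TAB)) : Fin 24 → ℤ) = tC := rfl
    have rcP : (((⟨tP, mem_tP⟩ : ↥TAB)) : Fin 24 → ℤ) = tP := rfl
    have rcM : (((⟨tM, mem_tM⟩ : ↥TAB)) : Fin 24 → ℤ) = tM := rfl
    have hPi : ∀ i : Fin 24, ((σ ⟨tP, mem_tP⟩ : ↥TAB) : Fin 24 → ℤ) i
        = ((σ ⟨tC, mem_tC⟩ : ↥TAB) : Fin 24 → ℤ) i + tC i - tP i := by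
      intro i
      have h := congrFun (hall (⟨tC, mem_tC⟩ : ↥TAB) (⟨tP, mem_tP⟩ : ↥TAB)) i
      simp only [Pi.sub_apply, Pi.neg_apply, rcC, rcP] at h
      omega
    have hMi : ∀ i : Fin 24, ((σ ⟨tM, mem_tM⟩ : ↥TAB) : Fin 24 → ℤ) i
        = ((σ ⟨tC, mem_tC⟩ : ↥TAB) : Fin 24 → ℤ) i + tC i - tM i := by
      intro i
      have h := congrFun (hall (⟨tC, mem_tC⟩ : ↥TAB) (⟨tM, mem_tM⟩ : ↥TAB)) i
      simp only [Pi.sub_apply, Pi.neg_apply, rcC, rcM] at h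
      omega
    have q1 := hν (⟨tC, mem_tC⟩ : ↥TAB) (⟨tP, mem_tP⟩ : ↥TAB)
    have q2 := hν (⟨tC, mem_tC⟩ : ↥TAB) (⟨tM, mem_tM⟩ : ↥TAB)
    have e1 : leechInner ((σ ⟨tC, mem_tC⟩ : ↥TAB) : Fin 24 → ℤ)
        ((σ ⟨tC, mem_tC⟩ : ↥TAB) : Fin 24 → ℤ) = 4 := mem_norm (σ ⟨tC, mem_tC⟩).2
    have e2 : leechInner (((σ ⟨tC, mem_tC⟩ : ↥TAB) : Fin 24 → ℤ) - vA)
        (((σ ⟨tC, mem_tC⟩ : ↥TAB) : Fin 24 → ℤ) - vA) = 4 := mem_normA (σ ⟨tC, mem_tC⟩).2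
    have e3 : leechInner (((σ ⟨tC, mem_tC⟩ : ↥TAB) : Fin 24 → ℤ) - vB)
        (((σ ⟨tC, mem_tC⟩ : ↥TAB) : Fin 24 → ℤ) - vB) = 4 := mem_normB (σ ⟨tC, mem_tC⟩).2
    simp only [li_expand] at q1 q2 e1 e2 e3
    simp only [rcC, rcP, rcM, Pi.sub_apply] at q1 q2 e2 e3
    simp only [hPi, hMi] at q1 q2
    norm_num [tC, tP, tM, vA, vB, fv0, fv1, fv2, fv3, fv4, fv5, fv6, fv7, fv8, fv9, fv10, fv11, fv12, fv13, fv14, fv15, fv16, fv17, fv18, fv19, fv20, fv21, fv22, fv23] at q1 q2 e2 e3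
    ring_nf at q1 q2 e1 e2 e3
    have h23 : (3:ℚ) * (((σ (⟨tC, mem_tC⟩ : ↥TAB) : ↥TAB) : Fin 24 → ℤ) 23 : ℚ) = -16 := by
      linarith [q1, q2, e1, e2, e3]
    have h24 : (3:ℤ) * (((σ (⟨tC, mem_tC⟩ : ↥TAB) : ↥TAB) : Fin 24 → ℤ) 23) = -16 := by
      exact_mod_cast h23
    omega
end
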